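/- arXiv:2106.11252 — 3 statements merged into one kernel-verified Lean document; each statement's English description precedes it below -/
import Mathlib

section
/- There exists a constant Λ₀ > 0 such that for every speed c ≤ 0 and every size L > 0, if problem (P₁) with parameters (c, L) admits a solution, then L ≥ Λ₀. Equivalently, Λ₀ ≤ inf_{c ≤ 0} Λ(c). -/
open Filter Set

noncomputable section

/-- Hypothesis (H1): `g` is a smooth bistable nonlinearity with zeros exactly
`0, α, 1` in `[0,1]`, `g'(0) < 0`, `g'(1) < 0`, `g'(α) > 0` and `∫₀¹ g > 0`. -/
structure BistableHyp (g : ℝ → ℝ) (α : ℝ) : Prop where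
  smooth : ContDiff ℝ (⊤ : ℕ∞) g
  alpha_pos : 0 < α
  alpha_lt_one : α < 1
  g_zero : g 0 = 0
  g_alpha : g α = 0
  g_one : g 1 = 0
  zeros : ∀ s ∈ Set.Icc (0:ℝ) 1, g s = 0 → s = 0 ∨ s = α ∨ s = 1
  deriv_zero_neg : deriv g 0 < 0
  deriv_one_neg : deriv g 1 < 0
  deriv_alpha_pos : 0 < deriv g α
  int_pos : 0 < ∫ s in (0:ℝ)..1, g s

/-- `u` satisfies the differential equation of problem (P₁) with parameters `(c, L)`,
together with the regularity (`C¹` on `ℝ`, `C²` away from `{0, L}`) and the bound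
`0 ≤ u ≤ 1`. -/
def SatODE1 (g : ℝ → ℝ) (μ c L : ℝ) (u : ℝ → ℝ) : Prop :=
  ContDiff ℝ 1 u ∧
  (∀ x : ℝ, x ≠ 0 → x ≠ L → ContDiffAt ℝ 2 u x) ∧
  (∀ x : ℝ, 0 ≤ u x ∧ u x ≤ 1) ∧
  (∀ x : ℝ, x ∉ Set.Icc (0:ℝ) L → -c * deriv u x - deriv (deriv u) x = g (u x)) ∧
  (∀ x ∈ Set.Ioo (0:ℝ) L, -c * deriv u x - deriv (deriv u) x = -μ * u x)

/-- `u` is a solution of problem (P₁) with parameters `(c, L)`: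
it satisfies the equation and the limit conditions `u(−∞) = 1`, `u(+∞) = 0`. -/
def IsSolP1 (g : ℝ → ℝ) (μ c L : ℝ) (u : ℝ → ℝ) : Prop :=
  SatODE1 g μ c L u ∧
  Tendsto u atBot (nhds 1) ∧
  Tendsto u atTop (nhds 0)

/-- `u` is the minimal solution of (P₁) with parameters `(c, L)`: any solution `v` of the
same differential equation with `v ≤ u` on `ℝ₊` equals `0` or `u`. -/
def IsMinSolP1 (g : ℝ → ℝ) (μ c L : ℝ) (u : ℝ → ℝ) : Prop :=
  IsSolP1 g μ c L u ∧
  ∀ v : ℝ → ℝ, SatODE1 g μ c L v → (∀ x : ℝ, 0 ≤ x → v x ≤ u x) →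
    v = (fun _ => (0:ℝ)) ∨ v = u

/-- `Λ(c)`: the infimum of sizes `L > 0` for which (P₁) with parameters `(c, L)` admits
a solution. -/
def Lam (g : ℝ → ℝ) (μ c : ℝ) : ℝ :=
  sInf {L : ℝ | 0 < L ∧ ∃ u : ℝ → ℝ, IsSolP1 g μ c L u}

/-- A decreasing traveling wave of speed `c` connecting `α` (at `−∞`) to `0` (at `+∞`). -/
def IsTWAlphaZero (g : ℝ → ℝ) (c α : ℝ) (w : ℝ → ℝ) : Prop :=
  ContDiff ℝ 2 w ∧ StrictAnti w ∧
  (∀ x : ℝ, -c * deriv w x - deriv (deriv w) x = g (w x)) ∧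
  Tendsto w atBot (nhds α) ∧ Tendsto w atTop (nhds 0)

/-- A sub-solution of (P₁) with parameters `(c, L)`. -/
def IsSubSolP1 (g : ℝ → ℝ) (μ c L : ℝ) (ψ : ℝ → ℝ) : Prop :=
  Continuous ψ ∧
  (∀ x : ℝ, x ≠ 0 → x ≠ L → ContDiffAt ℝ 2 ψ x) ∧
  (∀ x : ℝ, x ∉ Set.Icc (0:ℝ) L → -c * deriv ψ x - deriv (deriv ψ) x ≤ g (ψ x)) ∧
  (∀ x ∈ Set.Ioo (0:ℝ) L, -c * deriv ψ x - deriv (deriv ψ) x ≤ -μ * ψ x) ∧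
  (∀ ξ ∈ ({0, L} : Set ℝ), ∃ a b : ℝ,
    Tendsto (deriv ψ) (nhdsWithin ξ (Set.Iio ξ)) (nhds a) ∧
    Tendsto (deriv ψ) (nhdsWithin ξ (Set.Ioi ξ)) (nhds b) ∧ a ≤ b)

/-- Minimal solution of the half problem: only the limit condition at `−∞` is imposed. -/
def IsMinSolHalf (g : ℝ → ℝ) (μ c L : ℝ) (u : ℝ → ℝ) : Prop :=
  SatODE1 g μ c L u ∧
  Tendsto u atBot (nhds 1) ∧
  ∀ v : ℝ → ℝ, SatODE1 g μ c L v → (∀ x : ℝ, 0 ≤ x → v x ≤ u x) →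
    v = (fun _ => (0:ℝ)) ∨ v = u

lemma aux_hasDerivAt_deriv {u : ℝ → ℝ} {x : ℝ} (h : ContDiffAt ℝ 2 u x) :
    HasDerivAt (deriv u) (deriv (deriv u) x) x := by
  have hev : ∀ᶠ y in nhds x, ContDiffAt ℝ 2 u y := h.eventually (by norm_num)
  obtain ⟨t, htx, hto, ht⟩ := eventually_nhds_iff.1 hev
  have hcd : ContDiffOn ℝ 2 u t := fun y hy => (htx y hy).contDiffWithinAt
  have h1 : ContDiffOn ℝ 1 (deriv u) t := hcd.deriv_of_isOpen hto (by norm_num)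
  exact ((h1.differentiableOn one_ne_zero).differentiableAt (hto.mem_nhds ht)).hasDerivAt

set_option maxHeartbeats 1000000 in
/-- there is a universal lower bound `Λ₀ > 0` on sizes `L` for which
(P₁) with parameters `(c, L)`, `c ≤ 0`, admits a solution; i.e. `Λ₀ ≤ inf_{c ≤ 0} Λ(c)`. -/
theorem stmt4 (g : ℝ → ℝ) (α μ : ℝ) (hg : BistableHyp g α)
    (hμ : 0 < μ) (hμg : ∀ u ∈ Set.Icc (0:ℝ) 1, -μ * u ≤ g u) :
    ∃ Λ₀ : ℝ, 0 < Λ₀ ∧ ∀ c : ℝ, c ≤ 0 → ∀ L : ℝ, 0 < L →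
      (∃ u : ℝ → ℝ, IsSolP1 g μ c L u) → Λ₀ ≤ L := by
  have hgc : Continuous g := hg.smooth.continuous
  -- bound for g on [0,1]
  obtain ⟨M₀, hM₀⟩ := isCompact_Icc.exists_bound_of_continuousOn
    (hgc.continuousOn : ContinuousOn g (Icc (0:ℝ) 1))
  set M : ℝ := max M₀ 0 with hMdef
  have hM0 : 0 ≤ M := le_max_right _ _
  have hM : ∀ s ∈ Icc (0:ℝ) 1, |g s| ≤ M := fun s hs =>
    le_trans (by simpa using hM₀ s hs) (le_max_left _ _)
  -- primitive
  set G : ℝ → ℝ := fun s => ∫ t in (0:ℝ)..s, g t with hGdef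
  have hG : ∀ y : ℝ, HasDerivAt G (g y) y := fun y =>
    intervalIntegral.integral_hasDerivAt_right (hgc.intervalIntegrable _ _)
      (hgc.stronglyMeasurableAtFilter _ _) hgc.continuousAt
  have hGc : Continuous G := by
    have : Differentiable ℝ G := fun y => (hG y).differentiableAt
    exact this.continuous
  obtain ⟨K₀, hK₀⟩ := isCompact_Icc.exists_bound_of_continuousOn
    (hGc.neg.continuousOn : ContinuousOn (fun s => -G s) (Icc (0:ℝ) 1))
  set K : ℝ := max K₀ 0 with hKdef
  have hK0 : 0 ≤ K := le_max_right _ _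
  have hK : ∀ s ∈ Icc (0:ℝ) 1, -G s ≤ K := fun s hs =>
    le_trans (le_trans (le_abs_self _) (by simpa using hK₀ s hs)) (le_max_left _ _)
  set γ : ℝ := G 1 with hγdef
  have hγ : 0 < γ := hg.int_pos
  set D : ℝ := Real.sqrt (2 * K) with hDdef
  have hD0 : 0 ≤ D := Real.sqrt_nonneg _
  have hDsq : D ^ 2 = 2 * K := Real.sq_sqrt (by linarith)
  have hμM : 0 < μ + M := by linarith
  set κ : ℝ := γ / (μ + M) with hκdef
  have hκ : 0 < κ := div_pos hγ hμM
  set β : ℝ := (μ + D) / κ with hβdef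
  have hβ0 : 0 ≤ β := div_nonneg (by linarith) hκ.le
  set Λ₁ : ℝ := κ / (Real.exp β * (D + μ)) with hΛ₁def
  have hDμ : 0 < D + μ := by linarith
  have hΛ₁ : 0 < Λ₁ := div_pos hκ (mul_pos (Real.exp_pos _) hDμ)
  refine ⟨min 1 Λ₁, lt_min one_pos hΛ₁, ?_⟩
  rintro c hc L hL ⟨u, ⟨hC1, hC2, hbd, heqO, heqI⟩, hlim1, hlim0⟩
  rcases le_or_gt 1 L with h1L | h1L
  · exact le_trans (min_le_left _ _) h1L
  refine le_trans (min_le_right _ _) ?_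
  -- basic facts about u
  have hudiff : Differentiable ℝ u := hC1.differentiable one_ne_zero
  have huc : Continuous u := hC1.continuous
  have hu1c : Continuous (deriv u) := hC1.continuous_deriv le_rfl
  have hu' : ∀ x : ℝ, HasDerivAt u (deriv u x) x := fun x => (hudiff x).hasDerivAt
  have hder2 : ∀ x : ℝ, x ≠ 0 → x ≠ L → HasDerivAt (deriv u) (deriv (deriv u) x) x :=
    fun x h h' => aux_hasDerivAt_deriv (hC2 x h h')
  set a : ℝ := u 0 with hadef
  set b : ℝ := u L with hbdef
  have ha01 : a ∈ Icc (0:ℝ) 1 := ⟨(hbd 0).1, (hbd 0).2⟩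
  have hb01 : b ∈ Icc (0:ℝ) 1 := ⟨(hbd L).1, (hbd L).2⟩
  -- the energy
  set E : ℝ → ℝ := fun x => deriv u x * deriv u x / 2 + G (u x) with hEdef
  have hEc : Continuous E := ((hu1c.mul hu1c).div_const 2).add (hGc.comp huc)
  have hEd : ∀ x : ℝ, x ∉ Icc 0 L → HasDerivAt E (-c * (deriv u x * deriv u x)) x := by
    intro x hx
    have hx' : x < 0 ∨ L < x := by
      rcases lt_or_ge x 0 with h | h
      · exact Or.inl h
      · right; by_contra h'; exact hx ⟨h, le_of_not_gt h'⟩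
    have hne0 : x ≠ 0 := by
      rcases hx' with h | h
      · exact ne_of_lt h
      · exact ne_of_gt (lt_trans hL h)
    have hneL : x ≠ L := by
      rcases hx' with h | h
      · exact ne_of_lt (lt_trans h hL)
      · exact ne_of_gt h
    have h2 := hder2 x hne0 hneL
    have hsq : HasDerivAt (fun y => deriv u y * deriv u y / 2)
        ((deriv (deriv u) x * deriv u x + deriv u x * deriv (deriv u) x) / 2) x :=
      (h2.mul h2).div_const 2
    have hGu : HasDerivAt (fun y => G (u y)) (g (u x) * deriv u x) x :=
      (hG (u x)).comp x (hu' x)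
    have heq := heqO x hx
    have := hsq.add hGu
    refine this.congr_deriv ?_
    have hgu : g (u x) = -c * deriv u x - deriv (deriv u) x := heq.symm
    rw [hgu]; ring
  have hEmono1 : MonotoneOn E (Iic (0:ℝ)) := by
    apply monotoneOn_of_deriv_nonneg (convex_Iic 0) hEc.continuousOn
    · rw [interior_Iic]
      intro x hx
      have hx' : x ∉ Icc (0:ℝ) L := fun h => absurd h.1 (not_le.mpr hx)
      exact (hEd x hx').differentiableAt.differentiableWithinAt
    · rw [interior_Iic]
      intro x hx
      have hx' : x ∉ Icc (0:ℝ) L := fun h => absurd h.1 (not_le.mpr hx)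
      rw [(hEd x hx').deriv]
      exact mul_nonneg (neg_nonneg.mpr hc) (mul_self_nonneg _)
  have hEmono2 : MonotoneOn E (Ici L) := by
    apply monotoneOn_of_deriv_nonneg (convex_Ici L) hEc.continuousOn
    · rw [interior_Ici]
      intro x hx
      have hx' : x ∉ Icc (0:ℝ) L := fun h => absurd h.2 (not_le.mpr hx)
      exact (hEd x hx').differentiableAt.differentiableWithinAt
    · rw [interior_Ici]
      intro x hx
      have hx' : x ∉ Icc (0:ℝ) L := fun h => absurd h.2 (not_le.mpr hx)
      rw [(hEd x hx').deriv]
      exact mul_nonneg (neg_nonneg.mpr hc) (mul_self_nonneg _)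
  -- E 0 ≥ γ
  have hE0 : γ ≤ E 0 := by
    have hxi : ∀ n : ℕ, ∃ ξ ∈ Ioo (-(n:ℝ) - 1) (-(n:ℝ)),
        deriv u ξ = (u (-(n:ℝ)) - u (-(n:ℝ) - 1)) / ((-(n:ℝ)) - (-(n:ℝ) - 1)) :=
      fun n => exists_hasDerivAt_eq_slope u (deriv u) (by linarith)
        huc.continuousOn (fun x _ => hu' x)
    choose ξ hξmem hξval using hxi
    have hneg : Tendsto (fun n : ℕ => -(n:ℝ)) atTop atBot :=
      tendsto_neg_atBot_iff.mpr tendsto_natCast_atTop_atTop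
    have hneg1 : Tendsto (fun n : ℕ => -(n:ℝ) - 1) atTop atBot := by
      apply tendsto_atBot_add_const_right; exact hneg
    have hξbot : Tendsto ξ atTop atBot :=
      tendsto_atBot_mono (fun n => (hξmem n).2.le) hneg
    have huξ : Tendsto (fun n => u (ξ n)) atTop (nhds 1) := hlim1.comp hξbot
    have hu1ξ : Tendsto (fun n => deriv u (ξ n)) atTop (nhds 0) := by
      have hval : ∀ n, deriv u (ξ n) = u (-(n:ℝ)) - u (-(n:ℝ) - 1) := by
        intro n; rw [hξval n]; norm_num
      have : Tendsto (fun n : ℕ => u (-(n:ℝ)) - u (-(n:ℝ) - 1)) atTop (nhds (1 - 1)) :=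
        (hlim1.comp hneg).sub (hlim1.comp hneg1)
      simp only [sub_self] at this
      exact this.congr (fun n => (hval n).symm)
    have hEξ : Tendsto (fun n => E (ξ n)) atTop (nhds γ) := by
      have h1 : Tendsto (fun n => deriv u (ξ n) * deriv u (ξ n) / 2) atTop (nhds 0) := by
        have := (hu1ξ.mul hu1ξ).div_const 2
        simpa using this
      have h2 : Tendsto (fun n => G (u (ξ n))) atTop (nhds (G 1)) :=
        (hGc.continuousAt.tendsto).comp huξ
      have := h1.add h2
      simpa using this
    apply le_of_tendsto hEξ
    filter_upwards with n
    have hξ0 : ξ n ≤ 0 := le_trans (hξmem n).2.le (by simp)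
    exact hEmono1 (mem_Iic.mpr hξ0) (mem_Iic.mpr le_rfl) hξ0
  -- E L ≤ 0
  have hEL : E L ≤ 0 := by
    have hxi : ∀ n : ℕ, ∃ ξ ∈ Ioo (L + (n:ℝ)) (L + (n:ℝ) + 1),
        deriv u ξ = (u (L + (n:ℝ) + 1) - u (L + (n:ℝ))) / ((L + (n:ℝ) + 1) - (L + (n:ℝ))) :=
      fun n => exists_hasDerivAt_eq_slope u (deriv u) (by linarith)
        huc.continuousOn (fun x _ => hu' x)
    choose ξ hξmem hξval using hxi
    have hpos : Tendsto (fun n : ℕ => L + (n:ℝ)) atTop atTop :=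
      tendsto_atTop_add_const_left _ _ tendsto_natCast_atTop_atTop
    have hpos1 : Tendsto (fun n : ℕ => L + (n:ℝ) + 1) atTop atTop := by
      apply tendsto_atTop_add_const_right; exact hpos
    have hξtop : Tendsto ξ atTop atTop :=
      tendsto_atTop_mono (fun n => (hξmem n).1.le) hpos
    have huξ : Tendsto (fun n => u (ξ n)) atTop (nhds 0) := hlim0.comp hξtop
    have hu1ξ : Tendsto (fun n => deriv u (ξ n)) atTop (nhds 0) := by
      have hval : ∀ n, deriv u (ξ n) = u (L + (n:ℝ) + 1) - u (L + (n:ℝ)) := by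
        intro n; rw [hξval n]; norm_num
      have : Tendsto (fun n : ℕ => u (L + (n:ℝ) + 1) - u (L + (n:ℝ))) atTop (nhds (0 - 0)) :=
        (hlim0.comp hpos1).sub (hlim0.comp hpos)
      simp only [sub_self] at this
      exact this.congr (fun n => (hval n).symm)
    have hEξ : Tendsto (fun n => E (ξ n)) atTop (nhds 0) := by
      have h1 : Tendsto (fun n => deriv u (ξ n) * deriv u (ξ n) / 2) atTop (nhds 0) := by
        have := (hu1ξ.mul hu1ξ).div_const 2
        simpa using this
      have h2 : Tendsto (fun n => G (u (ξ n))) atTop (nhds (G 0)) :=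
        (hGc.continuousAt.tendsto).comp huξ
      have hG0 : G 0 = 0 := by simp [hGdef]
      have := h1.add h2
      rw [hG0] at this
      simpa using this
    apply ge_of_tendsto hEξ
    filter_upwards with n
    have hξL : L ≤ ξ n := le_trans (le_add_of_nonneg_right (Nat.cast_nonneg n)) (hξmem n).1.le
    exact hEmono2 (mem_Ici.mpr le_rfl) (mem_Ici.mpr hξL) hξL
  -- bound on deriv u L
  have hu1L : -D ≤ deriv u L ∧ deriv u L ≤ D := by
    have h1 : deriv u L * deriv u L / 2 + G b ≤ 0 := hEL
    have h2 : -G b ≤ K := hK b hb01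
    have h3 : deriv u L * deriv u L ≤ D ^ 2 := by rw [hDsq]; linarith
    constructor
    · nlinarith [sq_nonneg (deriv u L + D)]
    · nlinarith [sq_nonneg (deriv u L - D)]
  -- interior: F monotone
  set F : ℝ → ℝ := fun x => deriv u x * deriv u x / 2 - μ * (u x * u x) / 2 with hFdef
  have hFc : Continuous F :=
    ((hu1c.mul hu1c).div_const 2).sub ((continuous_const.mul (huc.mul huc)).div_const 2)
  have hFd : ∀ x ∈ Ioo (0:ℝ) L, HasDerivAt F (-c * (deriv u x * deriv u x)) x := by
    intro x hx
    have h2 := hder2 x (ne_of_gt hx.1) (ne_of_lt hx.2)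
    have hsq : HasDerivAt (fun y => deriv u y * deriv u y / 2)
        ((deriv (deriv u) x * deriv u x + deriv u x * deriv (deriv u) x) / 2) x :=
      (h2.mul h2).div_const 2
    have husq : HasDerivAt (fun y => μ * (u y * u y) / 2)
        (μ * (deriv u x * u x + u x * deriv u x) / 2) x :=
      (((hu' x).mul (hu' x)).const_mul μ).div_const 2
    have heq := heqI x hx
    have := hsq.sub husq
    refine this.congr_deriv ?_
    have h3 : deriv (deriv u) x = -c * deriv u x + μ * u x := by linarith
    rw [h3]; ring
  have hFmono : MonotoneOn F (Icc (0:ℝ) L) := by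
    apply monotoneOn_of_deriv_nonneg (convex_Icc 0 L) hFc.continuousOn
    · rw [interior_Icc]
      exact fun x hx => (hFd x hx).differentiableAt.differentiableWithinAt
    · rw [interior_Icc]
      intro x hx
      rw [(hFd x hx).deriv]
      exact mul_nonneg (neg_nonneg.mpr hc) (mul_self_nonneg _)
  have hF0L : F 0 ≤ F L := hFmono ⟨le_rfl, hL.le⟩ ⟨hL.le, le_rfl⟩ hL.le
  -- Φ and the drop κ ≤ a - b
  set Φ : ℝ → ℝ := fun s => μ * (s * s) / 2 + G s with hΦdef
  have hEF : ∀ x : ℝ, E x = F x + Φ (u x) := by intro x; simp [hEdef, hFdef, hΦdef]; ring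
  have hdrop : γ ≤ Φ a - Φ b := by
    have e0 := hEF 0
    have eL := hEF L
    rw [← hadef] at e0
    rw [← hbdef] at eL
    linarith
  have hΦint : ∀ x y : ℝ, Φ y - Φ x = ∫ s in x..y, (μ * s + g s) := by
    intro x y
    have h1 : (∫ s in x..y, μ * s) = μ * (y * y) / 2 - μ * (x * x) / 2 := by
      rw [intervalIntegral.integral_const_mul]
      have hid : (∫ s in x..y, s) = (y ^ 2 - x ^ 2) / 2 := integral_id
      rw [hid]; ring
    have h2 : (∫ s in x..y, g s) = G y - G x := by
      have hiy : IntervalIntegrable g MeasureTheory.volume 0 y := hgc.intervalIntegrable _ _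
      have hix : IntervalIntegrable g MeasureTheory.volume 0 x := hgc.intervalIntegrable _ _
      have := intervalIntegral.integral_interval_sub_left hiy hix
      simp only [hGdef]
      linarith [this]
    have hm : Continuous fun s : ℝ => μ * s := continuous_const.mul continuous_id
    have h3 : (∫ s in x..y, (μ * s + g s))
        = (∫ s in x..y, μ * s) + ∫ s in x..y, g s :=
      intervalIntegral.integral_add (hm.intervalIntegrable _ _) (hgc.intervalIntegrable _ _)
    have h4 : Φ y - Φ x = μ * (y * y) / 2 - μ * (x * x) / 2 + (G y - G x) := by
      simp only [hΦdef]; ring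
    rw [h4, h3, h1, h2]
  have hba : b ≤ a := by
    by_contra h
    push_neg at h
    have h1 : Φ b - Φ a = ∫ s in a..b, (μ * s + g s) := hΦint a b
    have h2 : 0 ≤ ∫ s in a..b, (μ * s + g s) := by
      apply intervalIntegral.integral_nonneg h.le
      intro s hs
      have hs01 : s ∈ Icc (0:ℝ) 1 := ⟨le_trans ha01.1 hs.1, le_trans hs.2 hb01.2⟩
      have := hμg s hs01
      linarith
    linarith [hdrop]
  have hκab : κ ≤ a - b := by
    have h1 : Φ a - Φ b = ∫ s in b..a, (μ * s + g s) := hΦint b a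
    have h2 : (∫ s in b..a, (μ * s + g s)) ≤ (a - b) * (μ + M) := by
      have : (∫ s in b..a, (μ * s + g s)) ≤ ∫ s in b..a, (μ + M) := by
        have hm : Continuous fun s : ℝ => μ * s + g s :=
          (continuous_const.mul continuous_id).add hgc
        apply intervalIntegral.integral_mono_on hba
          (hm.intervalIntegrable _ _) intervalIntegrable_const
        intro s hs
        have hs01 : s ∈ Icc (0:ℝ) 1 := ⟨le_trans hb01.1 hs.1, le_trans hs.2 ha01.2⟩
        have hgs := hM s hs01
        have h5 : μ * s ≤ μ := by nlinarith [hs01.1, hs01.2]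
        have h6 := abs_le.mp hgs
        linarith
      rw [intervalIntegral.integral_const] at this
      simpa [smul_eq_mul] using this
    have : γ ≤ (a - b) * (μ + M) := by linarith [hdrop]
    rw [hκdef, div_le_iff₀ hμM]
    linarith
  have hab0 : 0 < a - b := lt_of_lt_of_le hκ hκab
  -- q = exp(cx) * u'
  set q : ℝ → ℝ := fun x => Real.exp (c * x) * deriv u x with hqdef
  have hqc : Continuous q := ((Real.continuous_exp.comp (continuous_const.mul continuous_id)).mul hu1c)
  have hqd : ∀ x ∈ Ioo (0:ℝ) L, HasDerivAt q (Real.exp (c * x) * (μ * u x)) x := by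
    intro x hx
    have he : HasDerivAt (fun y => Real.exp (c * y)) (Real.exp (c * x) * c) x := by
      have := (Real.hasDerivAt_exp (c * x)).comp x ((hasDerivAt_id x).const_mul c)
      exact this.congr_deriv (by ring)
    have h2 := hder2 x (ne_of_gt hx.1) (ne_of_lt hx.2)
    have heq := heqI x hx
    have := he.mul h2
    refine this.congr_deriv ?_
    have h3 : μ * u x = c * deriv u x + deriv (deriv u) x := by linarith
    rw [h3]; ring
  have hqmono : MonotoneOn q (Icc (0:ℝ) L) := by
    apply monotoneOn_of_deriv_nonneg (convex_Icc 0 L) hqc.continuousOn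
    · rw [interior_Icc]
      exact fun x hx => (hqd x hx).differentiableAt.differentiableWithinAt
    · rw [interior_Icc]
      intro x hx
      rw [(hqd x hx).deriv]
      have := (hbd x).1
      positivity
  have hqdc : Continuous fun x : ℝ => Real.exp (c * x) * (μ * u x) := by
    have h1 : Continuous fun x : ℝ => Real.exp (c * x) :=
      Real.continuous_exp.comp (continuous_const.mul continuous_id)
    exact h1.mul (continuous_const.mul huc)
  have hqint : q L - q 0 = ∫ x in (0:ℝ)..L, Real.exp (c * x) * (μ * u x) := by
    symm
    apply intervalIntegral.integral_eq_sub_of_hasDeriv_right_of_le hL.le hqc.continuousOn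
      (fun x hx => (hqd x hx).hasDerivWithinAt)
    exact hqdc.intervalIntegrable _ _
  have hqLe : q L - q 0 ≤ μ * L := by
    rw [hqint]
    have : (∫ x in (0:ℝ)..L, Real.exp (c * x) * (μ * u x)) ≤ ∫ _x in (0:ℝ)..L, μ := by
      apply intervalIntegral.integral_mono_on hL.le
        (hqdc.intervalIntegrable _ _) intervalIntegrable_const
      intro x hx
      have he1 : Real.exp (c * x) ≤ 1 := Real.exp_le_one_iff.mpr (mul_nonpos_of_nonpos_of_nonneg hc hx.1)
      have he2 : 0 < Real.exp (c * x) := Real.exp_pos _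
      have hu1 : u x ≤ 1 := (hbd x).2
      have hu0 : 0 ≤ u x := (hbd x).1
      calc Real.exp (c * x) * (μ * u x) ≤ 1 * (μ * u x) :=
            mul_le_mul_of_nonneg_right he1 (by positivity)
        _ = μ * u x := one_mul _
        _ ≤ μ * 1 := mul_le_mul_of_nonneg_left hu1 hμ.le
        _ = μ := mul_one _
    rw [intervalIntegral.integral_const] at this
    simpa [smul_eq_mul, mul_comm] using this
  -- FTC for u
  have hIu1 : (∫ x in (0:ℝ)..L, deriv u x) = b - a := by
    rw [intervalIntegral.integral_deriv_eq_sub (fun x _ => hudiff x)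
      (hu1c.intervalIntegrable _ _)]
  -- deriv u 0 ≤ 0
  have hq0 : q 0 = deriv u 0 := by simp [hqdef]
  have hu10 : deriv u 0 ≤ 0 := by
    by_contra h
    push_neg at h
    have hpos : ∀ x ∈ Icc (0:ℝ) L, 0 ≤ deriv u x := by
      intro x hx
      have hq0x : q 0 ≤ q x := hqmono ⟨le_rfl, hL.le⟩ hx hx.1
      rw [hq0] at hq0x
      have hqx : 0 < q x := lt_of_lt_of_le h hq0x
      by_contra h'
      push_neg at h'
      have : q x ≤ 0 := mul_nonpos_of_nonneg_of_nonpos (Real.exp_pos _).le h'.le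
      linarith
    have : 0 ≤ ∫ x in (0:ℝ)..L, deriv u x :=
      intervalIntegral.integral_nonneg hL.le hpos
    rw [hIu1] at this
    linarith
  -- FTC for deriv u
  have hIu2 : deriv u L - deriv u 0 = ∫ x in (0:ℝ)..L, (μ * u x - c * deriv u x) := by
    symm
    apply intervalIntegral.integral_eq_sub_of_hasDeriv_right_of_le hL.le hu1c.continuousOn
    · intro x hx
      have h2 := hder2 x (ne_of_gt hx.1) (ne_of_lt hx.2)
      have heq := heqI x hx
      have h3 : deriv (deriv u) x = μ * u x - c * deriv u x := by linarith
      rw [← h3]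
      exact h2.hasDerivWithinAt
    · exact ((continuous_const.mul huc).sub (continuous_const.mul hu1c)).intervalIntegrable _ _
  have hIval : deriv u L - deriv u 0 = μ * (∫ x in (0:ℝ)..L, u x) - c * (b - a) := by
    rw [hIu2, intervalIntegral.integral_sub (f := fun x => μ * u x) (g := fun x => c * deriv u x)
      ((continuous_const.mul huc).intervalIntegrable _ _)
      ((continuous_const.mul hu1c).intervalIntegrable _ _),
      intervalIntegral.integral_const_mul, intervalIntegral.integral_const_mul, hIu1]
  have hIu : (∫ x in (0:ℝ)..L, u x) ≤ L := by
    have : (∫ x in (0:ℝ)..L, u x) ≤ ∫ _x in (0:ℝ)..L, (1:ℝ) := by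
      apply intervalIntegral.integral_mono_on hL.le (huc.intervalIntegrable _ _)
        intervalIntegrable_const
      exact fun x _ => (hbd x).2
    rw [intervalIntegral.integral_const] at this
    simpa using this
  have hIu0 : 0 ≤ ∫ x in (0:ℝ)..L, u x :=
    intervalIntegral.integral_nonneg hL.le (fun x _ => (hbd x).1)
  -- bound on -c
  have hcβ : -c ≤ β := by
    have h1 : (-c) * (a - b) = μ * (∫ x in (0:ℝ)..L, u x) - deriv u L + deriv u 0 := by
      linarith [hIval]
    have h2 : (-c) * (a - b) ≤ μ + D := by
      have : μ * (∫ x in (0:ℝ)..L, u x) ≤ μ * L := by nlinarith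
      nlinarith [hu1L.1, h1L]
    rw [hβdef, le_div_iff₀ hκ]
    have h3 : (-c) * κ ≤ (-c) * (a - b) :=
      mul_le_mul_of_nonneg_left hκab (neg_nonneg.mpr hc)
    linarith
  -- lower bound on deriv u 0
  have hqL : -D ≤ q L := by
    have he1 : Real.exp (c * L) ≤ 1 := Real.exp_le_one_iff.mpr (mul_nonpos_of_nonpos_of_nonneg hc hL.le)
    have he2 : 0 < Real.exp (c * L) := Real.exp_pos _
    have h1 : -D ≤ deriv u L := hu1L.1
    have h2 : 0 ≤ Real.exp (c * L) * (deriv u L + D) := by nlinarith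
    have h3 : 0 ≤ D * (1 - Real.exp (c * L)) := mul_nonneg hD0 (by linarith)
    have : q L = Real.exp (c * L) * deriv u L := rfl
    nlinarith
  have hu10lb : -(D + μ * L) ≤ deriv u 0 := by
    rw [← hq0]
    linarith [hqLe, hqL]
  -- pointwise lower bound on deriv u on [0, L]
  have hptwise : ∀ x ∈ Icc (0:ℝ) L, -(Real.exp (-(c * L)) * (D + μ * L)) ≤ deriv u x := by
    intro x hx
    have hq0x : q 0 ≤ q x := hqmono ⟨le_rfl, hL.le⟩ hx hx.1
    have h1 : -(D + μ * L) ≤ Real.exp (c * x) * deriv u x := by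
      rw [hq0] at hq0x
      calc -(D + μ * L) ≤ deriv u 0 := hu10lb
        _ ≤ q x := hq0x
        _ = Real.exp (c * x) * deriv u x := rfl
    have h2 : Real.exp (-(c * x)) * (-(D + μ * L)) ≤
        Real.exp (-(c * x)) * (Real.exp (c * x) * deriv u x) :=
      mul_le_mul_of_nonneg_left h1 (Real.exp_pos _).le
    have h3 : Real.exp (-(c * x)) * (Real.exp (c * x) * deriv u x) = deriv u x := by
      rw [← mul_assoc, ← Real.exp_add]
      simp
    have h4 : Real.exp (-(c * x)) ≤ Real.exp (-(c * L)) := by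
      apply Real.exp_le_exp.mpr
      have := mul_le_mul_of_nonpos_left hx.2 hc
      linarith
    have h5 : Real.exp (-(c * L)) * (-(D + μ * L)) ≤ Real.exp (-(c * x)) * (-(D + μ * L)) := by
      apply mul_le_mul_of_nonpos_right h4
      have : 0 ≤ μ * L := mul_nonneg hμ.le hL.le
      linarith
    rw [h3] at h2
    calc -(Real.exp (-(c * L)) * (D + μ * L)) = Real.exp (-(c * L)) * (-(D + μ * L)) := by ring
      _ ≤ Real.exp (-(c * x)) * (-(D + μ * L)) := h5
      _ ≤ deriv u x := h2
  -- final bound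
  have hfinal : a - b ≤ L * (Real.exp (-(c * L)) * (D + μ * L)) := by
    have h1 : (∫ _x in (0:ℝ)..L, -(Real.exp (-(c * L)) * (D + μ * L))) ≤
        ∫ x in (0:ℝ)..L, deriv u x := by
      apply intervalIntegral.integral_mono_on hL.le intervalIntegrable_const
        (hu1c.intervalIntegrable _ _) hptwise
    rw [hIu1, intervalIntegral.integral_const] at h1
    have : (L - 0) • (-(Real.exp (-(c * L)) * (D + μ * L))) =
        -(L * (Real.exp (-(c * L)) * (D + μ * L))) := by
      rw [smul_eq_mul]; ring
    rw [this] at h1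
    linarith
  have hexp : Real.exp (-(c * L)) ≤ Real.exp β := by
    apply Real.exp_le_exp.mpr
    have h1 : (-c) * L ≤ β * 1 :=
      mul_le_mul hcβ h1L.le hL.le hβ0
    linarith [h1]
  have hmain : κ ≤ L * (Real.exp β * (D + μ)) := by
    have h1 : 0 ≤ Real.exp (-(c * L)) := (Real.exp_pos _).le
    have h2 : D + μ * L ≤ D + μ := by
      have h5 : μ * L ≤ μ * 1 := mul_le_mul_of_nonneg_left h1L.le hμ.le
      have h6 : μ * 1 = μ := mul_one μ
      linarith only [h5, h6]
    have h3 : 0 ≤ D + μ * L := add_nonneg hD0 (mul_nonneg hμ.le hL.le)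
    have h4 : Real.exp (-(c * L)) * (D + μ * L) ≤ Real.exp β * (D + μ) := by
      apply mul_le_mul hexp h2 h3 (Real.exp_pos _).le
    calc κ ≤ a - b := hκab
      _ ≤ L * (Real.exp (-(c * L)) * (D + μ * L)) := hfinal
      _ ≤ L * (Real.exp β * (D + μ)) := mul_le_mul_of_nonneg_left h4 hL.le
  rw [hΛ₁def, div_le_iff₀ (mul_pos (Real.exp_pos _) hDμ)]
  exact hmain
end
end

section
/- There exists a decreasing function χ : (−∞, 0] → ℝ solving −χ″ = g(χ) on (−∞, 0) with χ(x) → 1 as x → −∞, χ(0) = 0, and χ′(0) = −√(2 ∫₀¹ g(u) du) < 0. Consequently, its extension by 0 on (0, +∞) is a sub-solution of problem (P₁) with parameters (c, L) for every c ≤ 0 and L > 0, satisfying ψ₋(−∞) = 1 and ψ₋ = 0 on ℝ₊. -/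
open Filter Set

noncomputable section

lemma g_neg_mid {g : ℝ → ℝ} {α : ℝ} (hg : BistableHyp g α) :
    ∀ s, 0 < s → s < α → g s < 0 := by
  intro s hs0 hsα
  by_contra hcon
  push_neg at hcon
  have h1 : α ≤ 1 := hg.alpha_lt_one.le
  have hs1 : s < 1 := hsα.trans_le h1
  have hgs : 0 < g s := by
    rcases hcon.eq_or_lt' with h | h
    · exfalso
      rcases hg.zeros s ⟨hs0.le, hs1.le⟩ h with h' | h' | h' <;> simp_all <;> linarith
    · exact h
  have hd : HasDerivAt g (deriv g 0) 0 :=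
    (hg.smooth.differentiable (by simp) 0).hasDerivAt
  have hslope := hasDerivAt_iff_tendsto_slope.1 hd
  have hev : ∀ᶠ t in nhdsWithin 0 {(0:ℝ)}ᶜ, slope g 0 t < 0 :=
    hslope.eventually_lt_const hg.deriv_zero_neg
  have hev' : ∀ᶠ t in nhdsWithin (0:ℝ) (Set.Ioi 0), slope g 0 t < 0 :=
    hev.filter_mono (nhdsWithin_mono _ (fun x hx => ne_of_gt hx))
  have hmem : Set.Ioo (0:ℝ) s ∈ nhdsWithin (0:ℝ) (Set.Ioi 0) :=
    Ioo_mem_nhdsGT_of_mem ⟨le_refl 0, hs0⟩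
  obtain ⟨t, ht, hts⟩ := (hev'.and (eventually_of_mem hmem (fun x hx => hx))).exists
  have hgt : g t < 0 := by
    have hsl : slope g 0 t = g t / t := by simp [slope, hg.g_zero]; ring
    rw [hsl] at ht
    rcases div_neg_iff.1 ht with ⟨_, h2⟩ | ⟨h2, _⟩
    · linarith [hts.1]
    · exact h2
  obtain ⟨z, hz, hgz⟩ := intermediate_value_Ioo hts.2.le
    (hg.smooth.continuous.continuousOn) (show (0:ℝ) ∈ Set.Ioo (g t) (g s) from ⟨hgt, hgs⟩)
  have hz0 : 0 < z := hts.1.trans hz.1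
  have hzα : z < α := hz.2.trans hsα
  rcases hg.zeros z ⟨hz0.le, (hzα.trans_le h1).le⟩ hgz with h' | h' | h' <;> linarith

lemma g_pos_mid {g : ℝ → ℝ} {α : ℝ} (hg : BistableHyp g α) :
    ∀ s, α < s → s < 1 → 0 < g s := by
  intro s hαs hs1
  by_contra hcon
  push_neg at hcon
  have h0 : 0 ≤ α := hg.alpha_pos.le
  have hs0 : 0 < s := hg.alpha_pos.trans hαs
  have hgs : g s < 0 := by
    rcases hcon.eq_or_lt with h | h
    · exfalso
      rcases hg.zeros s ⟨hs0.le, hs1.le⟩ h with h' | h' | h' <;> linarith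
    · exact h
  have hd : HasDerivAt g (deriv g 1) 1 :=
    (hg.smooth.differentiable (by simp) 1).hasDerivAt
  have hslope := hasDerivAt_iff_tendsto_slope.1 hd
  have hev : ∀ᶠ t in nhdsWithin 1 {(1:ℝ)}ᶜ, slope g 1 t < 0 :=
    hslope.eventually_lt_const hg.deriv_one_neg
  have hev' : ∀ᶠ t in nhdsWithin (1:ℝ) (Set.Iio 1), slope g 1 t < 0 :=
    hev.filter_mono (nhdsWithin_mono _ (fun x hx => ne_of_lt hx))
  have hmem : Set.Ioo s (1:ℝ) ∈ nhdsWithin (1:ℝ) (Set.Iio 1) :=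
    Ioo_mem_nhdsLT_of_mem ⟨hs1, le_refl 1⟩
  obtain ⟨t, ht, hts⟩ := (hev'.and (eventually_of_mem hmem (fun x hx => hx))).exists
  have hgt : 0 < g t := by
    have hsl : slope g 1 t = g t / (t - 1) := by simp [slope, hg.g_one]; ring
    rw [hsl] at ht
    rcases div_neg_iff.1 ht with ⟨h2, _⟩ | ⟨_, h2⟩
    · exact h2
    · linarith [hts.2]
  obtain ⟨z, hz, hgz⟩ := intermediate_value_Ioo hts.1.le
    (hg.smooth.continuous.continuousOn) (show (0:ℝ) ∈ Set.Ioo (g s) (g t) from ⟨hgs, hgt⟩)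
  have hαz : α < z := hαs.trans hz.1
  have hz1 : z < 1 := hz.2.trans hts.2
  rcases hg.zeros z ⟨(hg.alpha_pos.trans hαz).le, hz1.le⟩ hgz with h' | h' | h' <;> linarith

/-- there exists a decreasing `χ` on `(−∞, 0]` with `−χ'' = g(χ)` on
`(−∞, 0)`, `χ(−∞) = 1`, `χ(0) = 0`, `χ'(0) = −√(2∫₀¹ g) < 0`, whose extension by `0` on
`(0, +∞)` is a sub-solution of (P₁) with parameters `(c, L)` for every `c ≤ 0`, `L > 0`. -/
theorem stmt14 (g : ℝ → ℝ) (α μ : ℝ) (hg : BistableHyp g α)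
    (hμ : 0 < μ) (hμg : ∀ u ∈ Set.Icc (0:ℝ) 1, -μ * u ≤ g u) :
    ∃ χ : ℝ → ℝ,
      ContDiff ℝ 2 χ ∧
      StrictAntiOn χ (Set.Iic (0:ℝ)) ∧
      (∀ x : ℝ, x < 0 → -(deriv (deriv χ) x) = g (χ x)) ∧
      Tendsto χ atBot (nhds 1) ∧
      χ 0 = 0 ∧
      deriv χ 0 = -Real.sqrt (2 * ∫ u in (0:ℝ)..1, g u) ∧
      deriv χ 0 < 0 ∧
      (∀ c : ℝ, c ≤ 0 → ∀ L : ℝ, 0 < L →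
        IsSubSolP1 g μ c L (fun x => if x ≤ 0 then χ x else 0)) := by
  have hgc : Continuous g := hg.smooth.continuous
  set G : ℝ → ℝ := fun u => ∫ s in (0:ℝ)..u, g s with hGdef
  have hGd : ∀ u : ℝ, HasDerivAt G (g u) u := fun u =>
    intervalIntegral.integral_hasDerivAt_right (hgc.intervalIntegrable _ _)
      (hgc.stronglyMeasurableAtFilter _ _) hgc.continuousAt
  have hGderiv : deriv G = g := funext fun u => (hGd u).deriv
  have hGcd : ContDiff ℝ 2 G := by
    rw [show (2 : WithTop ℕ∞) = 1 + 1 from rfl, contDiff_succ_iff_deriv]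
    exact ⟨fun u => (hGd u).differentiableAt, by simp, hGderiv ▸ hg.smooth.of_le (by simp)⟩
  have hG1pos : 0 < G 1 := hg.int_pos
  set F : ℝ → ℝ := fun u => 2 * (G 1 - G u) with hFdef
  have hFd : ∀ u : ℝ, HasDerivAt F (-2 * g u) u := by
    intro u
    have := ((hGd u).const_sub (G 1)).const_mul 2
    exact this.congr_deriv (by ring)
  have hFcd : ContDiff ℝ 2 F := contDiff_const.mul (contDiff_const.sub hGcd)
  have hG0 : G 0 = 0 := intervalIntegral.integral_same
  have hF0 : F 0 = 2 * G 1 := by simp [hFdef, hG0]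
  -- F positive on [0,1)
  have hGle : ∀ u : ℝ, 0 ≤ u → u ≤ α → G u ≤ 0 := by
    intro u hu0 huα
    have : G u ≤ ∫ s in (0:ℝ)..u, (0:ℝ) := by
      apply intervalIntegral.integral_mono_on hu0
        (hgc.intervalIntegrable _ _) intervalIntegrable_const
      intro x hx
      rcases hx.1.eq_or_lt' with h | h
      · simp [h, hg.g_zero]
      rcases (hx.2.trans huα).eq_or_lt with h2 | h2
      · simp [h2, hg.g_alpha]
      · exact ((g_neg_mid hg) x h h2).le
    simpa using this
  have hFpos01 : ∀ u : ℝ, 0 ≤ u → u < 1 → 0 < F u := by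
    intro u hu0 hu1
    rcases le_or_gt u α with h | h
    · have := hGle u hu0 h
      simp only [hFdef]
      nlinarith
    · have hsub : G 1 - G u = ∫ s in u..1, g s :=
        intervalIntegral.integral_interval_sub_left (hgc.intervalIntegrable _ _)
          (hgc.intervalIntegrable _ _)
      have hpos' : 0 < ∫ s in u..1, g s := by
        apply intervalIntegral.intervalIntegral_pos_of_pos_on
          (hgc.intervalIntegrable _ _) _ hu1
        intro x hx
        exact (g_pos_mid hg) x (h.trans hx.1) hx.2
      simp only [hFdef]
      nlinarith [hsub ▸ hpos']
  -- δ
  have hFc : Continuous F := hFcd.continuous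
  have hev : ∀ᶠ u in nhds (0:ℝ), 0 < F u :=
    (hFc.continuousAt).eventually_const_lt (by rw [hF0]; positivity)
  obtain ⟨ε, hε, hball⟩ := Metric.eventually_nhds_iff.1 hev
  set δ : ℝ := ε / 5 with hδdef
  have hδ : 0 < δ := by positivity
  have hFposδ : ∀ u : ℝ, -(2*δ) ≤ u → u < 1 → 0 < F u := by
    intro u hu hu1
    rcases le_or_gt 0 u with h | h
    · exact hFpos01 u h hu1
    · apply hball
      rw [Real.dist_eq, sub_zero, abs_of_neg h]
      have : 0 < ε/5 := by positivity
      linarith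
  -- θ and φ
  set θ : ℝ → ℝ := fun u => Real.smoothTransition ((u + 2*δ)/δ) with hθdef
  have hθcd : ContDiff ℝ 2 θ := by
    have hcd2 : ContDiff ℝ 2 Real.smoothTransition := by
      exact_mod_cast Real.smoothTransition.contDiff (n := 2)
    exact hcd2.comp ((contDiff_id.add contDiff_const).div_const δ)
  have hθ1 : ∀ u : ℝ, -δ ≤ u → θ u = 1 := by
    intro u hu
    apply Real.smoothTransition.one_of_one_le
    rw [le_div_iff₀ hδ]
    linarith
  have hθ0 : ∀ u : ℝ, u ≤ -(2*δ) → θ u = 0 := by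
    intro u hu
    apply Real.smoothTransition.zero_of_nonpos
    apply div_nonpos_of_nonpos_of_nonneg _ hδ.le
    linarith
  have hθmem : ∀ u : ℝ, 0 ≤ θ u ∧ θ u ≤ 1 := fun u =>
    ⟨Real.smoothTransition.nonneg _, Real.smoothTransition.le_one _⟩
  set φ : ℝ → ℝ := fun u => θ u * F u + (1 - θ u) with hφdef
  have hφcd : ContDiff ℝ 2 φ := (hθcd.mul hFcd).add (contDiff_const.sub hθcd)
  have hφc : Continuous φ := hφcd.continuous
  have hφpos : ∀ u : ℝ, u < 1 → 0 < φ u := by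
    intro u hu1
    rcases le_or_gt u (-(2*δ)) with h | h
    · simp [hφdef, hθ0 u h]
    · have hF := hFposδ u (by linarith) hu1
      obtain ⟨h0, h1⟩ := hθmem u
      simp only [hφdef]
      rcases h0.eq_or_lt' with h2 | h2
      · rw [h2]; norm_num
      · nlinarith [mul_pos h2 hF]
  have hφF : ∀ u : ℝ, -δ < u → φ u = F u := by
    intro u hu
    simp [hφdef, hθ1 u hu.le]
  have hφ1 : ∀ u : ℝ, u ≤ -(2*δ) → φ u = 1 := by
    intro u hu
    simp [hφdef, hθ0 u hu]
  have hφ0 : φ 0 = 2 * G 1 := by rw [hφF 0 (by linarith), hF0]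
  -- k and ρ
  set k : ℝ → ℝ := fun u => (Real.sqrt (φ u))⁻¹ with hkdef
  have hkpos : ∀ u : ℝ, u < 1 → 0 < k u := fun u hu =>
    inv_pos.2 (Real.sqrt_pos.2 (hφpos u hu))
  have hknn : ∀ u : ℝ, 0 ≤ k u := fun u => inv_nonneg.2 (Real.sqrt_nonneg _)
  have hkcont : ContinuousOn k (Set.Iio 1) := by
    apply ContinuousOn.inv₀
    · exact (Real.continuous_sqrt.comp hφc).continuousOn
    · exact fun u hu => ne_of_gt (Real.sqrt_pos.2 (hφpos u hu))
  have hkint : ∀ a b : ℝ, a < 1 → b < 1 → IntervalIntegrable k MeasureTheory.volume a b := by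
    intro a b ha hb
    apply ContinuousOn.intervalIntegrable
    apply hkcont.mono
    intro x hx
    have hxle : x ≤ max a b := by
      rcases Set.mem_uIcc.1 hx with h | h
      · exact h.2.trans (le_max_right a b)
      · exact h.2.trans (le_max_left a b)
    exact lt_of_le_of_lt hxle (max_lt ha hb)
  set ρ : ℝ → ℝ := fun t => 1 - Real.exp (-t) with hρdef
  have hρd : ∀ t : ℝ, HasDerivAt ρ (Real.exp (-t)) t := by
    intro t
    have h1 : HasDerivAt (fun t : ℝ => Real.exp (-t)) (Real.exp (-t) * (-1)) t :=
      (Real.hasDerivAt_exp (-t)).comp t (hasDerivAt_neg t)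
    have := h1.const_sub 1
    exact this.congr_deriv (by ring)
  have hρlt : ∀ t : ℝ, ρ t < 1 := fun t => by
    simp [hρdef, Real.exp_pos]
  have hρ0 : ρ 0 = 0 := by simp [hρdef]
  -- W
  set I : ℝ → ℝ := fun v => ∫ s in (0:ℝ)..v, k s with hIdef
  have hId : ∀ v : ℝ, v < 1 → HasDerivAt I (k v) v := by
    intro v hv
    exact intervalIntegral.integral_hasDerivAt_right (hkint 0 v one_pos hv)
      (hkcont.stronglyMeasurableAtFilter isOpen_Iio v hv)
      (hkcont.continuousAt (Iio_mem_nhds hv))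
  set W : ℝ → ℝ := fun t => -I (ρ t) with hWdef
  have hWd : ∀ t : ℝ, HasDerivAt W (-(k (ρ t) * Real.exp (-t))) t := by
    intro t
    exact (((hId (ρ t) (hρlt t)).comp t (hρd t))).neg
  have hWd' : ∀ t : ℝ, deriv W t < 0 := by
    intro t
    rw [(hWd t).deriv]
    have := hkpos (ρ t) (hρlt t)
    have := Real.exp_pos (-t)
    nlinarith
  have hWanti : StrictAnti W := strictAnti_of_deriv_neg hWd'
  have hWdiff : Differentiable ℝ W := fun t => (hWd t).differentiableAt
  have hWcont : Continuous W := hWdiff.continuous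
  -- bound M with F s ≤ M (1-s)^2 on [0,1]
  obtain ⟨C, hC⟩ := (isCompact_Icc (a := (0:ℝ)) (b := 1)).exists_bound_of_continuousOn
    ((hg.smooth.continuous_deriv (by simp)).continuousOn)
  set M : ℝ := C + 1 with hMdef
  have hM : 0 < M := by
    have h1 := hC 0 ⟨le_refl 0, zero_le_one⟩
    have h2 : (0:ℝ) ≤ C := le_trans (norm_nonneg _) h1
    simp only [hMdef]; linarith
  have hgle : ∀ t ∈ Set.Icc (0:ℝ) 1, g t ≤ M * (1 - t) := by
    intro t ht
    have hdiff : ∀ x ∈ Set.Icc (0:ℝ) 1, DifferentiableAt ℝ g x := fun x _ =>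
      hg.smooth.differentiable (by simp) x
    have h3 := (convex_Icc (0:ℝ) 1).norm_image_sub_le_of_norm_deriv_le hdiff hC
      (Set.right_mem_Icc.2 zero_le_one) ht
    rw [hg.g_one, sub_zero, Real.norm_eq_abs, Real.norm_eq_abs,
      abs_of_nonpos (by linarith [ht.2] : t - 1 ≤ 0)] at h3
    have h4 := le_abs_self (g t)
    nlinarith [ht.2]
  have hA : ∀ t : ℝ, HasDerivAt (fun t : ℝ => -(M*(1-t)^2/2)) (M*(1-t)) t := by
    intro t
    have h1 : HasDerivAt (fun t : ℝ => 1 - t) (-1) t := (hasDerivAt_id t).const_sub 1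
    have h2 := (h1.pow 2).const_mul (-(M/2))
    have h3 : (fun t : ℝ => -(M*(1-t)^2/2)) = (fun y => -(M/2) * ((fun t : ℝ => 1 - t)^2) y) := by
      funext s; simp only [Pi.pow_apply]; ring
    rw [h3]
    exact h2.congr_deriv (by norm_num; ring)
  have hFle : ∀ s ∈ Set.Icc (0:ℝ) 1, F s ≤ M * (1-s)^2 := by
    intro s hs
    have hsub : G 1 - G s = ∫ t in s..1, g t :=
      intervalIntegral.integral_interval_sub_left (hgc.intervalIntegrable _ _)
        (hgc.intervalIntegrable _ _)
    have hcont : Continuous (fun t : ℝ => M * (1 - t)) := by fun_prop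
    have hmono : (∫ t in s..1, g t) ≤ ∫ t in s..1, M * (1-t) := by
      apply intervalIntegral.integral_mono_on hs.2 (hgc.intervalIntegrable _ _)
        (hcont.intervalIntegrable _ _)
      intro x hx
      exact hgle x ⟨le_trans hs.1 hx.1, hx.2⟩
    have hval : (∫ t in s..1, M * (1-t)) = M * (1-s)^2/2 := by
      rw [intervalIntegral.integral_eq_sub_of_hasDerivAt (fun t _ => hA t)
        (hcont.intervalIntegrable _ _)]
      norm_num
    have h5 : F s = 2 * ∫ t in s..1, g t := by simp only [hFdef, hsub]
    calc F s = 2 * ∫ t in s..1, g t := h5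
      _ ≤ 2 * (M*(1-s)^2/2) := by rw [← hval]; linarith [hmono]
      _ = M*(1-s)^2 := by ring
  have hsqM : 0 < Real.sqrt M := Real.sqrt_pos.2 hM
  have hklb : ∀ s_ ∈ Set.Ico (0:ℝ) 1, (Real.sqrt M * (1-s_))⁻¹ ≤ k s_ := by
    intro s hs
    have hφs : φ s = F s := hφF s (by linarith [hs.1])
    have hFs : 0 < F s := hFpos01 s hs.1 hs.2
    have h1 : Real.sqrt (F s) ≤ Real.sqrt M * (1-s) := by
      have := Real.sqrt_le_sqrt (hFle s ⟨hs.1, hs.2.le⟩)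
      rwa [Real.sqrt_mul hM.le, Real.sqrt_sq (by linarith [hs.2] : (0:ℝ) ≤ 1-s)] at this
    simp only [hkdef, hφs]
    exact inv_anti₀ (Real.sqrt_pos.2 hFs) h1
  have hBd : ∀ s : ℝ, s < 1 →
      HasDerivAt (fun s : ℝ => -((Real.sqrt M)⁻¹ * Real.log (1-s)))
        ((Real.sqrt M * (1-s))⁻¹) s := by
    intro s hs
    have h0 : (0:ℝ) < 1 - s := by linarith
    have h1 : HasDerivAt (fun s : ℝ => 1 - s) (-1) s := (hasDerivAt_id s).const_sub 1
    have h2 : HasDerivAt (fun s : ℝ => Real.log (1-s)) ((1-s)⁻¹ * (-1)) s :=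
      (Real.hasDerivAt_log (ne_of_gt h0)).comp s h1
    have h3 := (h2.const_mul ((Real.sqrt M)⁻¹)).neg
    exact h3.congr_deriv (by rw [mul_inv]; ring)
  have hIlb : ∀ v ∈ Set.Ico (0:ℝ) 1,
      (Real.sqrt M)⁻¹ * (-Real.log (1-v)) ≤ I v := by
    intro v hv
    have hcont2 : ContinuousOn (fun s : ℝ => (Real.sqrt M * (1-s))⁻¹) (Set.Icc 0 v) := by
      apply ContinuousOn.inv₀ (by fun_prop)
      intro x hx
      have : (0:ℝ) < 1 - x := by linarith [hx.2, hv.2]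
      positivity
    have hint2 : IntervalIntegrable (fun s : ℝ => (Real.sqrt M * (1-s))⁻¹)
        MeasureTheory.volume 0 v := by
      apply ContinuousOn.intervalIntegrable
      rwa [Set.uIcc_of_le hv.1]
    have heq : (∫ s in (0:ℝ)..v, (Real.sqrt M * (1-s))⁻¹)
        = (Real.sqrt M)⁻¹ * (-Real.log (1-v)) := by
      rw [intervalIntegral.integral_eq_sub_of_hasDerivAt
        (fun s hsm2 => by
          rw [Set.uIcc_of_le hv.1] at hsm2
          exact hBd s (lt_of_le_of_lt hsm2.2 hv.2)) hint2]
      simp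
    rw [← heq]
    apply intervalIntegral.integral_mono_on hv.1 hint2 (hkint 0 v one_pos hv.2)
    intro x hx
    exact hklb x ⟨hx.1, lt_of_le_of_lt hx.2 hv.2⟩
  have hWtop : Tendsto W atTop atBot := by
    apply tendsto_atBot_mono' atTop (f₁ := fun t => (Real.sqrt M)⁻¹ * (-t))
    · filter_upwards [eventually_ge_atTop (0:ℝ)] with t ht
      have hρmem : ρ t ∈ Set.Ico (0:ℝ) 1 := by
        constructor
        · simp only [hρdef, sub_nonneg]
          exact Real.exp_le_one_iff.2 (by linarith)
        · exact hρlt t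
      have h1 := hIlb (ρ t) hρmem
      have h2 : (1:ℝ) - ρ t = Real.exp (-t) := by simp [hρdef]
      simp only [hWdef]
      rw [h2] at h1
      rw [Real.log_exp] at h1
      linarith
    · exact (tendsto_neg_atTop_atBot).const_mul_atBot (inv_pos.2 hsqM)
  have hWbot : Tendsto W atBot atTop := by
    apply tendsto_atTop_mono' atBot (f₁ := fun t => Real.exp (-t) - 1 - 2*δ)
    · filter_upwards [eventually_le_atBot (-Real.log (1+2*δ))] with t ht
      have hexp : 1 + 2*δ ≤ Real.exp (-t) := by
        rw [← Real.exp_log (by linarith : (0:ℝ) < 1+2*δ)]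
        exact Real.exp_le_exp.2 (by linarith)
      have hρle : ρ t ≤ -(2*δ) := by simp only [hρdef]; linarith
      have hδ1 : -(2*δ) < 1 := by linarith
      have hρt1 : ρ t < 1 := hρlt t
      have hsplit : (∫ s in (ρ t)..(-(2*δ)), k s) + (∫ s in (-(2*δ))..(0:ℝ), k s) = -I (ρ t) := by
        rw [intervalIntegral.integral_add_adjacent_intervals (hkint _ _ hρt1 hδ1)
          (hkint _ _ hδ1 one_pos)]
        exact intervalIntegral.integral_symm 0 (ρ t)
      have hfirst : (∫ s in (ρ t)..(-(2*δ)), k s) = -(2*δ) - ρ t := by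
        rw [intervalIntegral.integral_congr (g := fun _ => (1:ℝ))]
        · simp
        · intro s hs
          rw [Set.uIcc_of_le hρle] at hs
          simp only [hkdef]
          rw [hφ1 s hs.2, Real.sqrt_one, inv_one]
      have hsecond : 0 ≤ ∫ s in (-(2*δ))..(0:ℝ), k s :=
        intervalIntegral.integral_nonneg (by linarith) (fun u _ => hknn u)
      show Real.exp (-t) - 1 - 2*δ ≤ W t
      calc Real.exp (-t) - 1 - 2*δ ≤ (-(2*δ) - ρ t) + ∫ s in (-(2*δ))..(0:ℝ), k s := by
            simp only [hρdef]; linarith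
        _ = -I (ρ t) := by rw [← hfirst, hsplit]
        _ = W t := rfl
    · have h1 : Tendsto (fun t : ℝ => Real.exp (-t)) atBot atTop :=
        Real.tendsto_exp_atTop.comp tendsto_neg_atBot_atTop
      have h2 := Filter.tendsto_atTop_add_const_right atBot (-1 - 2*δ) h1
      apply h2.congr
      intro t; ring
  have hWsurj : Function.Surjective W := hWcont.surjective' hWbot hWtop
  -- inverse V of W
  set Wn : ℝ → ℝ := fun t => W (-t) with hWndef
  have hWnmono : StrictMono Wn := fun a b h => hWanti (neg_lt_neg h)
  have hWnsurj : Function.Surjective Wn := by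
    intro y
    obtain ⟨t, ht⟩ := hWsurj y
    exact ⟨-t, by simpa [hWndef, neg_neg] using ht⟩
  set e := StrictMono.orderIsoOfSurjective Wn hWnmono hWnsurj with hedef
  have hecoe : ∀ x : ℝ, e x = Wn x := fun x => by
    rw [hedef, StrictMono.coe_orderIsoOfSurjective]
  set V : ℝ → ℝ := fun y => -(e.symm y) with hVdef
  have hWV : ∀ y : ℝ, W (V y) = y := by
    intro y
    have h := e.apply_symm_apply y
    rw [hecoe] at h
    simpa [hVdef, hWndef] using h
  have hVW : ∀ t : ℝ, V (W t) = t := fun t => hWanti.injective (hWV (W t))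
  have hVcont : Continuous V := (e.symm.continuous).neg
  have hVanti : StrictAnti V := fun a b h => neg_lt_neg (e.symm.strictMono h)
  have hVatTop : Tendsto V atBot atTop := by
    rw [tendsto_atTop]
    intro b
    filter_upwards [eventually_le_atBot (W b)] with y hy
    by_contra hc
    push_neg at hc
    have h1 : W b < W (V y) := hWanti hc
    rw [hWV y] at h1
    linarith
  -- χ
  set χ : ℝ → ℝ := fun x => ρ (V x) with hχdef
  have hχlt1 : ∀ x : ℝ, χ x < 1 := fun x => hρlt _
  have hχd : ∀ x : ℝ, HasDerivAt χ (-Real.sqrt (φ (χ x))) x := by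
    intro x
    have hkx : 0 < k (ρ (V x)) := hkpos _ (hρlt _)
    have hex : 0 < Real.exp (-(V x)) := Real.exp_pos _
    have hWne : -(k (ρ (V x)) * Real.exp (-(V x))) ≠ 0 := by nlinarith
    have hV : HasDerivAt V (-(k (ρ (V x)) * Real.exp (-(V x))))⁻¹ x :=
      HasDerivAt.of_local_left_inverse hVcont.continuousAt (hWd (V x)) hWne
        (Filter.Eventually.of_forall hWV)
    have hcomp := (hρd (V x)).comp x hV
    have hval : Real.exp (-(V x)) * (-(k (ρ (V x)) * Real.exp (-(V x))))⁻¹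
        = -Real.sqrt (φ (χ x)) := by
      have hs : 0 < Real.sqrt (φ (ρ (V x))) := Real.sqrt_pos.2 (hφpos _ (hρlt _))
      have hs' := hs.ne'
      have hex' := hex.ne'
      simp only [hχdef, hkdef]
      rw [inv_neg, mul_inv, inv_inv]
      field_simp
    rw [← hval]
    exact hcomp
  have hχ'lt : ∀ x : ℝ, deriv χ x < 0 := fun x => by
    rw [(hχd x).deriv]
    exact neg_lt_zero.2 (Real.sqrt_pos.2 (hφpos _ (hχlt1 x)))
  have hχanti : StrictAnti χ := strictAnti_of_deriv_neg hχ'lt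
  have hI0 : I 0 = 0 := intervalIntegral.integral_same
  have hχ0 : χ 0 = 0 := by
    have hW0 : W 0 = 0 := by simp only [hWdef, hρ0, hI0, neg_zero]
    have hV0 : V 0 = 0 := by
      nth_rewrite 1 [← hW0]
      rw [hVW]
    simp only [hχdef, hV0, hρ0]
  have hχderiv : deriv χ = fun x => -Real.sqrt (φ (χ x)) := funext fun x => (hχd x).deriv
  have hχdiff : Differentiable ℝ χ := fun x => (hχd x).differentiableAt
  have hχcont : Continuous χ := hχdiff.continuous
  have hχC1 : ContDiff ℝ 1 χ := contDiff_one_iff_deriv.2 ⟨hχdiff, by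
    rw [hχderiv]; exact (Real.continuous_sqrt.comp (hφc.comp hχcont)).neg⟩
  have hχC2 : ContDiff ℝ 2 χ := by
    rw [show (2 : WithTop ℕ∞) = 1 + 1 from rfl, contDiff_succ_iff_deriv]
    refine ⟨hχdiff, by simp, ?_⟩
    rw [hχderiv]
    apply contDiff_iff_contDiffAt.2
    intro x
    have h1 : ContDiffAt ℝ 1 Real.sqrt (φ (χ x)) :=
      Real.contDiffAt_sqrt (ne_of_gt (hφpos _ (hχlt1 x)))
    exact (ContDiffAt.comp x h1
      (((hφcd.of_le one_le_two).contDiffAt).comp x hχC1.contDiffAt)).neg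
  have hχ'0 : deriv χ 0 = -Real.sqrt (2 * G 1) := by
    rw [hχderiv]
    simp only [hχ0, hφ0]
  have hχtends : Tendsto χ atBot (nhds 1) := by
    have h1 : Tendsto (fun u : ℝ => 1 - Real.exp (-u)) atTop (nhds 1) := by
      have h2 : Tendsto (fun u : ℝ => Real.exp (-u)) atTop (nhds 0) :=
        Real.tendsto_exp_atBot.comp tendsto_neg_atTop_atBot
      simpa using tendsto_const_nhds.sub h2
    exact h1.comp hVatTop
  have hχ'' : ∀ x : ℝ, -δ < χ x → deriv (deriv χ) x = -g (χ x) := by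
    intro x hx
    have hp : 0 < φ (χ x) := hφpos _ (hχlt1 x)
    have hsq : 0 < Real.sqrt (φ (χ x)) := Real.sqrt_pos.2 hp
    have hevφ : φ =ᶠ[nhds (χ x)] F := by
      filter_upwards [Ioi_mem_nhds hx] with u hu
      exact hφF u hu
    have hφd : HasDerivAt φ (-2 * g (χ x)) (χ x) :=
      (hFd (χ x)).congr_of_eventuallyEq hevφ
    have hsqd : HasDerivAt Real.sqrt (1 / (2 * Real.sqrt (φ (χ x)))) (φ (χ x)) :=
      Real.hasDerivAt_sqrt hp.ne'
    have hcomp : HasDerivAt (fun y => Real.sqrt (φ (χ y)))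
        (1 / (2 * Real.sqrt (φ (χ x))) * ((-2 * g (χ x)) * (-Real.sqrt (φ (χ x))))) x :=
      hsqd.comp x (hφd.comp x (hχd x))
    have hd2 : deriv (deriv χ) x
        = -(1 / (2 * Real.sqrt (φ (χ x))) * ((-2 * g (χ x)) * (-Real.sqrt (φ (χ x))))) := by
      rw [hχderiv]
      exact hcomp.neg.deriv
    rw [hd2]
    field_simp
  -- the ODE for x < 0
  have hode : ∀ x : ℝ, x < 0 → -(deriv (deriv χ) x) = g (χ x) := by
    intro x hx
    have h0 : 0 < χ x := by
      have := hχanti hx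
      rwa [hχ0] at this
    rw [hχ'' x (by linarith)]
    ring
  have hχ'0' : deriv χ 0 = -Real.sqrt (2 * ∫ u in (0:ℝ)..1, g u) := hχ'0
  have hχ'0neg : deriv χ 0 < 0 := hχ'lt 0
  -- ψ basics
  set ψ : ℝ → ℝ := fun x => if x ≤ 0 then χ x else 0 with hψdef
  have hψcont : Continuous ψ := by
    apply Continuous.if_le hχcont continuous_const continuous_id continuous_const
    intro x hx
    rw [show x = 0 from hx, hχ0]
  have hψeqneg : ∀ x : ℝ, x < 0 → ψ =ᶠ[nhds x] χ := by
    intro x hx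
    filter_upwards [Iio_mem_nhds hx] with y hy
    exact if_pos (le_of_lt hy)
  have hψeqpos : ∀ x : ℝ, 0 < x → ψ =ᶠ[nhds x] (fun _ => (0:ℝ)) := by
    intro x hx
    filter_upwards [Ioi_mem_nhds hx] with y hy
    exact if_neg (not_le.2 hy)
  have hψd1neg : ∀ x : ℝ, x < 0 → deriv ψ x = deriv χ x := fun x hx =>
    (hψeqneg x hx).deriv_eq
  have hψd2neg : ∀ x : ℝ, x < 0 → deriv (deriv ψ) x = deriv (deriv χ) x := fun x hx =>
    ((hψeqneg x hx).deriv).deriv_eq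
  have hψd1pos : ∀ x : ℝ, 0 < x → deriv ψ x = 0 := fun x hx => by
    rw [(hψeqpos x hx).deriv_eq]
    exact deriv_const x 0
  have hψd2pos : ∀ x : ℝ, 0 < x → deriv (deriv ψ) x = 0 := fun x hx => by
    have h1 := (hψeqpos x hx).deriv
    rw [h1.deriv_eq]
    simp
  refine ⟨χ, hχC2, hχanti.strictAntiOn _, hode, hχtends, hχ0, hχ'0', hχ'0neg, ?_⟩
  intro c hc L hL
  show IsSubSolP1 g μ c L ψ
  refine ⟨hψcont, ?_, ?_, ?_, ?_⟩
  · -- C² away from 0 and L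
    intro x hx0 _
    rcases lt_or_gt_of_ne hx0 with h | h
    · exact hχC2.contDiffAt.congr_of_eventuallyEq (hψeqneg x h)
    · exact contDiffAt_const.congr_of_eventuallyEq (hψeqpos x h)
  · -- outside [0, L]
    intro x hx
    rw [Set.mem_Icc, not_and_or, not_le, not_le] at hx
    rcases hx with h | h
    · have h0 : 0 < χ x := by
        have := hχanti h
        rwa [hχ0] at this
      rw [hψd1neg x h, hψd2neg x h, hχ'' x (by linarith),
        show ψ x = χ x from if_pos h.le]
      nlinarith [hχ'lt x]
    · have h0 : 0 < x := hL.trans h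
      rw [hψd1pos x h0, hψd2pos x h0, show ψ x = 0 from if_neg (not_le.2 h0), hg.g_zero]
      ring_nf
      exact le_refl 0
  · -- inside (0, L)
    intro x hx
    rw [hψd1pos x hx.1, hψd2pos x hx.1, show ψ x = 0 from if_neg (not_le.2 hx.1)]
    ring_nf
    exact le_refl 0
  · -- corner conditions
    intro ξ hξ
    have hdχc : Continuous (deriv χ) := by
      rw [hχderiv]
      exact (Real.continuous_sqrt.comp (hφc.comp hχcont)).neg
    rcases hξ with h | h
    · subst h
      refine ⟨deriv χ 0, 0, ?_, ?_, (hχ'lt 0).le⟩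
      · apply Filter.Tendsto.congr' _ (hdχc.continuousAt.continuousWithinAt)
        exact Filter.eventuallyEq_of_mem self_mem_nhdsWithin
          (fun y (hy : y ∈ Set.Iio 0) => (hψd1neg y hy).symm)
      · apply Filter.Tendsto.congr' _ tendsto_const_nhds
        exact Filter.eventuallyEq_of_mem self_mem_nhdsWithin
          (fun y (hy : y ∈ Set.Ioi 0) => (hψd1pos y hy).symm)
    · rw [Set.mem_singleton_iff] at h
      subst h
      refine ⟨0, 0, ?_, ?_, le_refl 0⟩
      · apply Filter.Tendsto.congr' _ tendsto_const_nhds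
        exact Filter.eventuallyEq_of_mem
          (Ioo_mem_nhdsLT_of_mem ⟨hL, le_refl ξ⟩)
          (fun y (hy : y ∈ Set.Ioo 0 ξ) => (hψd1pos y hy.1).symm)
      · apply Filter.Tendsto.congr' _ tendsto_const_nhds
        exact Filter.eventuallyEq_of_mem self_mem_nhdsWithin
          (fun y (hy : y ∈ Set.Ioi ξ) => (hψd1pos y (hL.trans hy)).symm)
end
end

section
/- For any parameters L > 0, c ≤ 0, M > 0 and μ_s > 0, there exists a function m_S : ℝ → ℝ belonging to H¹(ℝ) ∩ C¹(ℝ), solving −c m_S′ − m_S″ + μ_s m_S = M·1_{(0,L)} weakly on ℝ (hence classically on ℝ \ {0, L}), and satisfying: (i) 0 ≤ m_S(x) ≤ M/μ_s for all x; (ii) m_S(x) → 0 as x → ±∞; (iii) there exists x₀ ∈ (0, L) such that m_S is increasing on (−∞, x₀) and decreasing on (x₀, +∞). -/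
/-!
Let `r > 0 > s` be the roots of `λ² + cλ - μ_s`. The Green function of
`u ↦ -c u' - u'' + μ_s u` is `k x = exp (min (r x) (s x)) / (r - s)`, and its primitive `H`
vanishing at `-∞` solves the equation with source `1_{(0,∞)}` and increases from `0` to `1 / μ_s`;
so `m_S x = M (H x - H (x - L))`. Since `k` increases and then decreases,
`m_S' = M (k x - k (x - L))` changes sign exactly once, at `r L / (r - s)`. By the mean value
theorem `m_S x = M L k ξ` for some `ξ ∈ (x - L, x)`, so `m_S` and `m_S'` are dominated by
multiples of `k ∈ L²`.
-/

open Filter Set MeasureTheory Real Topology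

theorem exists_characteristic_roots (c : ℝ) {μ : ℝ} (hμ : 0 < μ) :
    ∃ r s : ℝ, 0 < r ∧ s < 0 ∧ r + s = -c ∧ r * s = -μ := by
  set d := √(c ^ 2 + 4 * μ)
  have hd : d ^ 2 = c ^ 2 + 4 * μ := sq_sqrt (by positivity)
  have hcd : |c| < d := abs_lt_of_sq_lt_sq (by nlinarith) (sqrt_nonneg _)
  refine ⟨(-c + d) / 2, (-c - d) / 2, ?_, ?_, by ring, by linear_combination -hd / 4⟩ <;>
    linarith [neg_abs_le c, le_abs_self c]

theorem integrable_exp_min {a b : ℝ} (ha : 0 < a) (hb : b < 0) :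
    Integrable fun x => exp (min (a * x) (b * x)) := by
  have hmeas : AEStronglyMeasurable (fun x => exp (min (a * x) (b * x))) volume :=
    (by fun_prop : Continuous fun x => exp (min (a * x) (b * x))).aestronglyMeasurable
  rw [← integrableOn_univ, ← Iic_union_Ioi (a := (0 : ℝ))]
  refine IntegrableOn.union ?_ ?_
  · refine (integrableOn_exp_mul_Iic ha 0).mono' hmeas.restrict ?_
    filter_upwards with x
    rw [norm_of_nonneg (exp_pos _).le]
    exact exp_le_exp.2 (min_le_left _ _)
  · refine (integrableOn_exp_mul_Ioi hb 0).mono' hmeas.restrict ?_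
    filter_upwards with x
    rw [norm_of_nonneg (exp_pos _).le]
    exact exp_le_exp.2 (min_le_right _ _)

theorem memLp_two_exp_min {a b : ℝ} (ha : 0 < a) (hb : b < 0) :
    MemLp (fun x => exp (min (a * x) (b * x))) 2 := by
  refine (memLp_two_iff_integrable_sq (by fun_prop)).2 ?_
  refine (integrable_exp_min (by positivity : 0 < 2 * a) (by linarith : 2 * b < 0)).congr ?_
  filter_upwards with x
  rw [← exp_nat_mul, Nat.cast_ofNat, mul_min_of_nonneg _ _ zero_le_two, mul_assoc, mul_assoc]

theorem hasDerivAt_const_mul_sub_comp_sub {f : ℝ → ℝ} {f' f'' M L x : ℝ}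
    (hx : HasDerivAt f f' x) (hxL : HasDerivAt f f'' (x - L)) :
    HasDerivAt (fun y => M * (f y - f (y - L))) (M * (f' - f'')) x :=
  (hx.sub (hxL.comp_sub_const x L)).const_mul M

theorem indicator_Ioo_eq_mul_sub {L M x : ℝ} (hL : 0 ≤ L) (hx : x ≠ L) :
    (Ioo 0 L).indicator (fun _ => M) x
      = M * ((if 0 < x then 1 else 0) - if 0 < x - L then 1 else 0) := by
  simp only [indicator, mem_Ioo, sub_pos]
  rcases lt_or_ge 0 x with h0 | h0 <;> rcases hx.lt_or_gt with hxL | hxL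
  · simp [h0, hxL, hxL.not_gt]
  · simp [h0, hxL, hxL.not_gt]
  · simp [h0.not_gt, (h0.trans hL).not_gt]
  · linarith

noncomputable def greenKernel (r s x : ℝ) : ℝ := exp (min (r * x) (s * x)) / (r - s)

section greenKernel

variable {r s : ℝ}

theorem continuous_greenKernel : Continuous (greenKernel r s) := by
  unfold greenKernel; fun_prop

theorem greenKernel_pos (hsr : s < r) (x : ℝ) : 0 < greenKernel r s x :=
  div_pos (exp_pos _) (sub_pos.2 hsr)

theorem greenKernel_lt_greenKernel (hsr : s < r) {x y : ℝ}
    (h : min (r * x) (s * x) < min (r * y) (s * y)) : greenKernel r s x < greenKernel r s y :=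
  div_lt_div_of_pos_right (exp_lt_exp.2 h) (sub_pos.2 hsr)

theorem greenKernel_le_of_mem_Icc (hr : 0 ≤ r) (hs : s ≤ 0) {x L t : ℝ}
    (ht : t ∈ Icc (x - L) x) :
    greenKernel r s t ≤ exp (-(s * L)) * greenKernel r s x := by
  have hsr : 0 ≤ r - s := by linarith
  rw [greenKernel, greenKernel, mul_div_assoc', ← exp_add]
  gcongr
  rw [← min_add_add_left]
  refine le_min (min_le_of_left_le ?_) (min_le_of_right_le ?_) <;> nlinarith [ht.1, ht.2]

theorem greenKernel_eventuallyEq_of_neg (hsr : s ≤ r) {x : ℝ} (hx : x < 0) :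
    greenKernel r s =ᶠ[𝓝 x] fun y => exp (r * y) / (r - s) := by
  filter_upwards [Iio_mem_nhds hx] with y hy
  rw [greenKernel, min_eq_left (by nlinarith [mem_Iio.1 hy])]

theorem greenKernel_eventuallyEq_of_pos (hsr : s ≤ r) {x : ℝ} (hx : 0 < x) :
    greenKernel r s =ᶠ[𝓝 x] fun y => exp (s * y) / (r - s) := by
  filter_upwards [Ioi_mem_nhds hx] with y hy
  rw [greenKernel, min_eq_right (by nlinarith [mem_Ioi.1 hy])]

theorem hasDerivAt_greenKernel_of_neg (hsr : s ≤ r) {x : ℝ} (hx : x < 0) :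
    HasDerivAt (greenKernel r s) (r * greenKernel r s x) x := by
  rw [(greenKernel_eventuallyEq_of_neg hsr hx).hasDerivAt_iff,
    (greenKernel_eventuallyEq_of_neg hsr hx).eq_of_nhds, mul_div_assoc']
  simpa [mul_comm] using ((hasDerivAt_id x).const_mul r).exp.div_const (r - s)

theorem hasDerivAt_greenKernel_of_pos (hsr : s ≤ r) {x : ℝ} (hx : 0 < x) :
    HasDerivAt (greenKernel r s) (s * greenKernel r s x) x := by
  rw [(greenKernel_eventuallyEq_of_pos hsr hx).hasDerivAt_iff,
    (greenKernel_eventuallyEq_of_pos hsr hx).eq_of_nhds, mul_div_assoc']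
  simpa [mul_comm] using ((hasDerivAt_id x).const_mul s).exp.div_const (r - s)

theorem contDiffAt_greenKernel (hsr : s ≤ r) {x : ℝ} (hx : x ≠ 0) {n : WithTop ℕ∞} :
    ContDiffAt ℝ n (greenKernel r s) x := by
  rcases hx.lt_or_gt with hx | hx
  · exact ContDiffAt.congr_of_eventuallyEq (by fun_prop) (greenKernel_eventuallyEq_of_neg hsr hx)
  · exact ContDiffAt.congr_of_eventuallyEq (by fun_prop) (greenKernel_eventuallyEq_of_pos hsr hx)

theorem tendsto_greenKernel_atBot (hr : 0 < r) : Tendsto (greenKernel r s) atBot (𝓝 0) := by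
  have h : Tendsto (fun x => min (r * x) (s * x)) atBot atBot :=
    tendsto_atBot_mono (fun x => min_le_left _ _) (tendsto_id.const_mul_atBot hr)
  exact zero_div (r - s) ▸ (tendsto_exp_atBot.comp h).div_const (r - s)

theorem tendsto_greenKernel_atTop (hs : s < 0) : Tendsto (greenKernel r s) atTop (𝓝 0) := by
  have h : Tendsto (fun x => min (r * x) (s * x)) atTop atBot :=
    tendsto_atBot_mono (fun x => min_le_right _ _) (tendsto_id.const_mul_atTop_of_neg hs)
  exact zero_div (r - s) ▸ (tendsto_exp_atBot.comp h).div_const (r - s)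

theorem memLp_two_greenKernel (hr : 0 < r) (hs : s < 0) : MemLp (greenKernel r s) 2 :=
  ((memLp_two_exp_min hr hs).mul_const (r - s)⁻¹).congr_norm
    continuous_greenKernel.aestronglyMeasurable (by
    filter_upwards with x
    rw [greenKernel, div_eq_mul_inv])

end greenKernel

noncomputable def stepResponse (r s x : ℝ) : ℝ :=
  if x ≤ 0 then greenKernel r s x / r else greenKernel r s x / s - 1 / (r * s)

section stepResponse

variable {r s : ℝ}

theorem stepResponse_eventuallyEq_of_neg {x : ℝ} (hx : x < 0) :
    stepResponse r s =ᶠ[𝓝 x] fun y => greenKernel r s y / r := by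
  filter_upwards [Iic_mem_nhds hx] with y hy
  rw [stepResponse, if_pos (show y ≤ 0 from hy)]

theorem stepResponse_eventuallyEq_of_pos {x : ℝ} (hx : 0 < x) :
    stepResponse r s =ᶠ[𝓝 x] fun y => greenKernel r s y / s - 1 / (r * s) := by
  filter_upwards [Ioi_mem_nhds hx] with y hy
  rw [stepResponse, if_neg (not_le.2 hy)]

theorem continuous_stepResponse (hr : 0 < r) (hs : s < 0) : Continuous (stepResponse r s) := by
  refine (continuous_greenKernel.div_const r).if_le
    ((continuous_greenKernel.div_const s).sub continuous_const) continuous_id continuous_const ?_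
  rintro x rfl
  have hsr : r - s ≠ 0 := by linarith
  have hs₀ := hs.ne
  simp only [greenKernel, mul_zero, min_self, exp_zero]
  field_simp
  ring

theorem hasDerivAt_stepResponse (hr : 0 < r) (hs : s < 0) (x : ℝ) :
    HasDerivAt (stepResponse r s) (greenKernel r s x) x := by
  have hsr : s ≤ r := by linarith
  refine hasDerivAt_of_hasDerivAt_of_ne' (x := 0) (fun y hy => ?_)
    (continuous_stepResponse hr hs).continuousAt continuous_greenKernel.continuousAt x
  rcases hy.lt_or_gt with hy | hy
  · rw [(stepResponse_eventuallyEq_of_neg hy).hasDerivAt_iff]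
    simpa only [mul_div_cancel_left₀ _ hr.ne'] using
      (hasDerivAt_greenKernel_of_neg hsr hy).div_const r
  · rw [(stepResponse_eventuallyEq_of_pos hy).hasDerivAt_iff]
    simpa only [mul_div_cancel_left₀ _ hs.ne] using
      ((hasDerivAt_greenKernel_of_pos hsr hy).div_const s).sub_const (1 / (r * s))

theorem deriv_stepResponse (hr : 0 < r) (hs : s < 0) :
    deriv (stepResponse r s) = greenKernel r s :=
  funext fun x => (hasDerivAt_stepResponse hr hs x).deriv

theorem strictMono_stepResponse (hr : 0 < r) (hs : s < 0) : StrictMono (stepResponse r s) :=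
  strictMono_of_deriv_pos fun x => by
    rw [deriv_stepResponse hr hs]; exact greenKernel_pos (hs.trans hr) x

theorem contDiffAt_stepResponse (hsr : s ≤ r) {x : ℝ} (hx : x ≠ 0) {n : WithTop ℕ∞} :
    ContDiffAt ℝ n (stepResponse r s) x := by
  rcases hx.lt_or_gt with hx | hx
  · exact ((contDiffAt_greenKernel hsr hx.ne).div_const r).congr_of_eventuallyEq
      (stepResponse_eventuallyEq_of_neg hx)
  · exact (((contDiffAt_greenKernel hsr hx.ne').div_const s).sub
      contDiffAt_const).congr_of_eventuallyEq (stepResponse_eventuallyEq_of_pos hx)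

theorem stepResponse_ode {c μ : ℝ} (hr : 0 < r) (hs : s < 0) (hc : r + s = -c)
    (hμ : r * s = -μ) {x : ℝ} (hx : x ≠ 0) :
    -c * deriv (stepResponse r s) x - deriv (deriv (stepResponse r s)) x
      + μ * stepResponse r s x = if 0 < x then 1 else 0 := by
  have hsr : s ≤ r := by linarith
  have hs₀ := hs.ne
  rw [show c = -(r + s) by linarith, show μ = -(r * s) by linarith, deriv_stepResponse hr hs]
  rcases hx.lt_or_gt with hx | hx
  · rw [(hasDerivAt_greenKernel_of_neg hsr hx).deriv,
      (stepResponse_eventuallyEq_of_neg hx).eq_of_nhds, if_neg hx.not_gt]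
    field_simp
    ring
  · rw [(hasDerivAt_greenKernel_of_pos hsr hx).deriv,
      (stepResponse_eventuallyEq_of_pos hx).eq_of_nhds, if_pos hx]
    field_simp
    ring

theorem tendsto_stepResponse_atBot (hr : 0 < r) :
    Tendsto (stepResponse r s) atBot (𝓝 0) := by
  refine zero_div r ▸ ((tendsto_greenKernel_atBot (s := s) hr).div_const r).congr' ?_
  filter_upwards [eventually_le_atBot 0] with x hx
  rw [stepResponse, if_pos hx]

theorem tendsto_stepResponse_atTop {μ : ℝ} (hs : s < 0) (hμ : r * s = -μ) :
    Tendsto (stepResponse r s) atTop (𝓝 μ⁻¹) := by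
  have h := ((tendsto_greenKernel_atTop (r := r) hs).div_const s).sub_const (1 / (r * s))
  rw [zero_div, zero_sub, hμ, one_div, inv_neg, neg_neg] at h
  refine h.congr' ?_
  filter_upwards [eventually_gt_atTop 0] with x hx
  rw [stepResponse, if_neg (not_le.2 hx), hμ, one_div, inv_neg]

end stepResponse

noncomputable def releaseDensity (M L r s x : ℝ) : ℝ :=
  M * (stepResponse r s x - stepResponse r s (x - L))

section releaseDensity

variable {M L r s : ℝ}

theorem hasDerivAt_releaseDensity (hr : 0 < r) (hs : s < 0) (x : ℝ) :
    HasDerivAt (releaseDensity M L r s) (M * (greenKernel r s x - greenKernel r s (x - L))) x :=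
  hasDerivAt_const_mul_sub_comp_sub (hasDerivAt_stepResponse hr hs x)
    (hasDerivAt_stepResponse hr hs (x - L))

theorem deriv_releaseDensity (hr : 0 < r) (hs : s < 0) :
    deriv (releaseDensity M L r s)
      = fun x => M * (greenKernel r s x - greenKernel r s (x - L)) :=
  funext fun x => (hasDerivAt_releaseDensity hr hs x).deriv

theorem contDiff_one_releaseDensity (hr : 0 < r) (hs : s < 0) :
    ContDiff ℝ 1 (releaseDensity M L r s) := by
  refine contDiff_one_iff_deriv.2
    ⟨fun x => (hasDerivAt_releaseDensity hr hs x).differentiableAt, ?_⟩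
  rw [deriv_releaseDensity hr hs]
  have := continuous_greenKernel (r := r) (s := s)
  fun_prop

theorem contDiffAt_releaseDensity (hsr : s ≤ r) {x : ℝ} (hx₀ : x ≠ 0) (hxL : x ≠ L)
    {n : WithTop ℕ∞} : ContDiffAt ℝ n (releaseDensity M L r s) x :=
  contDiffAt_const.mul ((contDiffAt_stepResponse hsr hx₀).sub
    ((contDiffAt_stepResponse hsr (sub_ne_zero.2 hxL)).comp x
      (contDiffAt_id.sub contDiffAt_const)))

theorem releaseDensity_ode {c μ : ℝ} (hL : 0 ≤ L) (hr : 0 < r) (hs : s < 0) (hc : r + s = -c)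
    (hμ : r * s = -μ) {x : ℝ} (hx₀ : x ≠ 0) (hxL : x ≠ L) :
    -c * deriv (releaseDensity M L r s) x - deriv (deriv (releaseDensity M L r s)) x
      + μ * releaseDensity M L r s x = (Ioo 0 L).indicator (fun _ => M) x := by
  have hxL' : x - L ≠ 0 := sub_ne_zero.2 hxL
  have hH' : deriv (stepResponse r s) = greenKernel r s := deriv_stepResponse hr hs
  have hH'' {y : ℝ} (hy : y ≠ 0) : HasDerivAt (deriv (stepResponse r s))
      (deriv (deriv (stepResponse r s)) y) y := by
    rw [hH']
    exact ((contDiffAt_greenKernel (n := 1) (hs.trans hr).le hy).differentiableAt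
      one_ne_zero).hasDerivAt
  have hm'' : deriv (deriv (releaseDensity M L r s)) x = M * (deriv (deriv (stepResponse r s)) x
      - deriv (deriv (stepResponse r s)) (x - L)) := by
    rw [deriv_releaseDensity hr hs, ← hH']
    exact (hasDerivAt_const_mul_sub_comp_sub (hH'' hx₀) (hH'' hxL')).deriv
  rw [hm'', deriv_releaseDensity hr hs, releaseDensity, indicator_Ioo_eq_mul_sub hL hxL,
    ← stepResponse_ode hr hs hc hμ hx₀, ← stepResponse_ode hr hs hc hμ hxL', hH']
  ring

theorem exists_releaseDensity_eq_mul_greenKernel (hr : 0 < r) (hs : s < 0) (hL : 0 < L)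
    (x : ℝ) :
    ∃ ξ ∈ Ioo (x - L) x, releaseDensity M L r s x = M * L * greenKernel r s ξ := by
  obtain ⟨ξ, hξ, h⟩ := exists_hasDerivAt_eq_slope (stepResponse r s) (greenKernel r s)
    (sub_lt_self x hL) (continuous_stepResponse hr hs).continuousOn
    (fun y _ => hasDerivAt_stepResponse hr hs y)
  refine ⟨ξ, hξ, ?_⟩
  rw [h, sub_sub_cancel, releaseDensity]
  field_simp

theorem releaseDensity_pos (hM : 0 < M) (hL : 0 < L) (hr : 0 < r) (hs : s < 0) (x : ℝ) :
    0 < releaseDensity M L r s x := by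
  obtain ⟨ξ, -, h⟩ := exists_releaseDensity_eq_mul_greenKernel (M := M) hr hs hL x
  rw [h]
  have := greenKernel_pos (hs.trans hr) ξ
  positivity

theorem releaseDensity_le {μ : ℝ} (hM : 0 ≤ M) (hr : 0 < r) (hs : s < 0) (hμ : r * s = -μ)
    (x : ℝ) : releaseDensity M L r s x ≤ M / μ := by
  have hmono := (strictMono_stepResponse hr hs).monotone
  have hupper := hmono.ge_of_tendsto (tendsto_stepResponse_atTop hs hμ) x
  have hlower := hmono.le_of_tendsto (tendsto_stepResponse_atBot hr) (x - L)
  rw [releaseDensity, div_eq_mul_inv]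
  exact mul_le_mul_of_nonneg_left (by linarith) hM

theorem abs_releaseDensity_le (hM : 0 ≤ M) (hL : 0 < L) (hr : 0 < r) (hs : s < 0) (x : ℝ) :
    |releaseDensity M L r s x| ≤ M * L * exp (-(s * L)) * |greenKernel r s x| := by
  obtain ⟨ξ, hξ, h⟩ := exists_releaseDensity_eq_mul_greenKernel (M := M) hr hs hL x
  have hξx := greenKernel_le_of_mem_Icc hr.le hs.le (Ioo_subset_Icc_self hξ)
  rw [h, abs_of_nonneg (greenKernel_pos (hs.trans hr) x).le,
    abs_of_nonneg (by have := greenKernel_pos (hs.trans hr) ξ; positivity), mul_assoc _ (exp _)]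
  gcongr

theorem abs_deriv_releaseDensity_le (hM : 0 ≤ M) (hL : 0 ≤ L) (hr : 0 < r) (hs : s < 0)
    (x : ℝ) :
    |deriv (releaseDensity M L r s) x| ≤ M * exp (-(s * L)) * |greenKernel r s x| := by
  have hpos (y : ℝ) := greenKernel_pos (hs.trans hr) y
  have h1 := greenKernel_le_of_mem_Icc hr.le hs.le (right_mem_Icc.2 (sub_le_self x hL))
  have h2 := greenKernel_le_of_mem_Icc hr.le hs.le (left_mem_Icc.2 (sub_le_self x hL))
  rw [deriv_releaseDensity hr hs, abs_mul, abs_of_nonneg hM, abs_of_pos (hpos x), mul_assoc]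
  gcongr
  exact abs_sub_le_iff.2 ⟨by linarith [hpos (x - L)], by linarith [hpos x]⟩

theorem memLp_two_releaseDensity (hM : 0 ≤ M) (hL : 0 < L) (hr : 0 < r) (hs : s < 0) :
    MemLp (releaseDensity M L r s) 2 :=
  (memLp_two_greenKernel hr hs).of_le_mul
    (contDiff_one_releaseDensity hr hs).continuous.aestronglyMeasurable
    (Eventually.of_forall (abs_releaseDensity_le hM hL hr hs))

theorem memLp_two_deriv_releaseDensity (hM : 0 ≤ M) (hL : 0 ≤ L) (hr : 0 < r) (hs : s < 0) :
    MemLp (deriv (releaseDensity M L r s)) 2 :=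
  (memLp_two_greenKernel hr hs).of_le_mul
    ((contDiff_one_releaseDensity hr hs).continuous_deriv le_rfl).aestronglyMeasurable
    (Eventually.of_forall (abs_deriv_releaseDensity_le hM hL hr hs))

theorem tendsto_releaseDensity_atBot (hr : 0 < r) :
    Tendsto (releaseDensity M L r s) atBot (𝓝 0) := by
  have h := tendsto_stepResponse_atBot (s := s) hr
  have hshift : Tendsto (fun x => x - L) atBot atBot :=
    tendsto_atBot_add_const_right _ (-L) tendsto_id
  have hm := (h.sub (h.comp hshift)).const_mul M
  rwa [sub_zero, mul_zero] at hm

theorem tendsto_releaseDensity_atTop {μ : ℝ} (hs : s < 0) (hμ : r * s = -μ) :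
    Tendsto (releaseDensity M L r s) atTop (𝓝 0) := by
  have h := tendsto_stepResponse_atTop hs hμ
  have hshift : Tendsto (fun x => x - L) atTop atTop :=
    tendsto_atTop_add_const_right _ (-L) tendsto_id
  have hm := (h.sub (h.comp hshift)).const_mul M
  rwa [sub_self, mul_zero] at hm

theorem strictMonoOn_releaseDensity (hM : 0 < M) (hL : 0 < L) (hr : 0 < r) (hs : s < 0) :
    StrictMonoOn (releaseDensity M L r s) (Iio (r * L / (r - s))) := by
  refine strictMonoOn_of_deriv_pos (convex_Iio _)
    (contDiff_one_releaseDensity hr hs).continuous.continuousOn fun x hx => ?_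
  rw [interior_Iio, mem_Iio, lt_div_iff₀ (by linarith)] at hx
  rw [deriv_releaseDensity hr hs]
  refine mul_pos hM (sub_pos.2 (greenKernel_lt_greenKernel (by linarith) ?_))
  exact min_lt_of_left_lt (lt_min (by nlinarith) (by nlinarith))

theorem strictAntiOn_releaseDensity (hM : 0 < M) (hL : 0 < L) (hr : 0 < r) (hs : s < 0) :
    StrictAntiOn (releaseDensity M L r s) (Ioi (r * L / (r - s))) := by
  refine strictAntiOn_of_deriv_neg (convex_Ioi _)
    (contDiff_one_releaseDensity hr hs).continuous.continuousOn fun x hx => ?_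
  rw [interior_Ioi, mem_Ioi, div_lt_iff₀ (by linarith)] at hx
  rw [deriv_releaseDensity hr hs]
  refine mul_neg_of_pos_of_neg hM (sub_neg.2 (greenKernel_lt_greenKernel (by linarith) ?_))
  exact min_lt_of_right_lt (lt_min (by nlinarith) (by nlinarith))

end releaseDensity

theorem stmt15_general (c L M μs : ℝ) (hL : 0 < L) (hM : 0 < M) (hμs : 0 < μs) :
    ∃ mS : ℝ → ℝ,
      ContDiff ℝ 1 mS ∧
      MemLp mS 2 (volume : Measure ℝ) ∧
      MemLp (deriv mS) 2 (volume : Measure ℝ) ∧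
      (∀ x : ℝ, x ≠ 0 → x ≠ L →
        ContDiffAt ℝ 2 mS x ∧
        -c * deriv mS x - deriv (deriv mS) x + μs * mS x =
          Set.indicator (Set.Ioo (0:ℝ) L) (fun _ => M) x) ∧
      (∀ x : ℝ, 0 ≤ mS x ∧ mS x ≤ M / μs) ∧
      Tendsto mS atBot (nhds 0) ∧ Tendsto mS atTop (nhds 0) ∧
      ∃ x₀ ∈ Set.Ioo (0:ℝ) L, StrictMonoOn mS (Set.Iio x₀) ∧ StrictAntiOn mS (Set.Ioi x₀) := by
  obtain ⟨r, s, hr, hs, hc, hμ⟩ := exists_characteristic_roots c hμs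
  have hsr : 0 < r - s := by linarith
  refine ⟨releaseDensity M L r s, contDiff_one_releaseDensity hr hs,
    memLp_two_releaseDensity hM.le hL hr hs, memLp_two_deriv_releaseDensity hM.le hL.le hr hs,
    fun x hx₀ hxL => ⟨contDiffAt_releaseDensity (hs.trans hr).le hx₀ hxL, ?_⟩,
    fun x => ⟨(releaseDensity_pos hM hL hr hs x).le, releaseDensity_le hM.le hr hs hμ x⟩,
    tendsto_releaseDensity_atBot hr, tendsto_releaseDensity_atTop hs hμ,
    r * L / (r - s), ⟨div_pos (mul_pos hr hL) hsr, ?_⟩,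
    strictMonoOn_releaseDensity hM hL hr hs, strictAntiOn_releaseDensity hM hL hr hs⟩
  · exact releaseDensity_ode hL.le hr hs hc hμ hx₀ hxL
  · rw [div_lt_iff₀ hsr]
    nlinarith

/-- existence and properties of the sterile-male density `m_S`, solving
`−c m_S' − m_S'' + μ_s m_S = M·1_{(0,L)}`: it belongs to `H¹(ℝ) ∩ C¹(ℝ)`, satisfies
`0 ≤ m_S ≤ M/μ_s`, vanishes at `±∞`, and is increasing then decreasing around some
`x₀ ∈ (0, L)`. -/
theorem stmt15 (c L M μs : ℝ) (hc : c ≤ 0) (hL : 0 < L) (hM : 0 < M) (hμs : 0 < μs) :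
    ∃ mS : ℝ → ℝ,
      ContDiff ℝ 1 mS ∧
      MemLp mS 2 (volume : Measure ℝ) ∧
      MemLp (deriv mS) 2 (volume : Measure ℝ) ∧
      (∀ x : ℝ, x ≠ 0 → x ≠ L →
        ContDiffAt ℝ 2 mS x ∧
        -c * deriv mS x - deriv (deriv mS) x + μs * mS x =
          Set.indicator (Set.Ioo (0:ℝ) L) (fun _ => M) x) ∧
      (∀ x : ℝ, 0 ≤ mS x ∧ mS x ≤ M / μs) ∧
      Tendsto mS atBot (nhds 0) ∧ Tendsto mS atTop (nhds 0) ∧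
      ∃ x₀ ∈ Set.Ioo (0:ℝ) L, StrictMonoOn mS (Set.Iio x₀) ∧ StrictAntiOn mS (Set.Ioi x₀) :=
  stmt15_general c L M μs hL hM hμs
end
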